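/- arXiv:1807.01256 — 12 statements merged into one kernel-verified Lean document; each statement's English description precedes it below -/
import Mathlib

section
/- Let x* ∈ (ℝ^R)^I satisfy the rest-point equations x*^{ir} = C^{ir}(x*) for all i ∈ I and r ∈ R. Then for all i, k ∈ I and r, s ∈ R, the partial derivative of G^{ir} with respect to the coordinate x^{ks}, evaluated at x*, equals π^{ir}(x*)·( β_k · π^{kr}(x*) · (π^{ks}(x*) − δ_{rs}) · Λ^r_{ik}(x*) − δ_{ik}·δ_{rs} ), where δ denotes the Kronecker delta. -/
open Finset

/-- Logit choice probabilities `π^{ir}(x)`. -/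
noncomputable def logitProb {I R : Type*} [Fintype R] (β : I → ℝ)
    (x : I → R → ℝ) (i : I) (r : R) : ℝ :=
  Real.exp (-(β i) * x i r) / ∑ s : R, Real.exp (-(β i) * x i s)

/-- Expected conditional cost `C^{ir}(x)`. -/
noncomputable def condCost {I R : Type*} [Fintype I] [DecidableEq I] [Fintype R]
    (β : I → ℝ) (C : R → ℕ → ℝ) (x : I → R → ℝ) (i : I) (r : R) : ℝ :=
  ∑ A ∈ ((univ : Finset I).erase i).powerset,
    (∏ j ∈ A, logitProb β x j r) *
      (∏ j ∈ ((univ : Finset I).erase i) \ A, (1 - logitProb β x j r)) *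
        C r (1 + A.card)

/-- The mean field vector field `G^{ir}(x) = π^{ir}(x) (C^{ir}(x) - x^{ir})`. -/
noncomputable def meanField {I R : Type*} [Fintype I] [DecidableEq I] [Fintype R]
    (β : I → ℝ) (C : R → ℕ → ℝ) (x : I → R → ℝ) (i : I) (r : R) : ℝ :=
  logitProb β x i r * (condCost β C x i r - x i r)

/-- The quantity `Λ^r_{ik}(x)`, equal to `0` when `k = i`. -/
noncomputable def lambdaCost {I R : Type*} [Fintype I] [DecidableEq I] [Fintype R]
    (β : I → ℝ) (C : R → ℕ → ℝ) (x : I → R → ℝ) (i k : I) (r : R) : ℝ :=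
  if k = i then 0 else
    ∑ A ∈ (((univ : Finset I).erase i).erase k).powerset,
      (∏ j ∈ A, logitProb β x j r) *
        (∏ j ∈ (((univ : Finset I).erase i).erase k) \ A, (1 - logitProb β x j r)) *
          (C r (2 + A.card) - C r (1 + A.card))

lemma logitProb_congr {I R : Type*} [Fintype R] (β : I → ℝ)
    {x x' : I → R → ℝ} {j : I} (h : x j = x' j) (r : R) :
    logitProb β x j r = logitProb β x' j r := by simp [logitProb, h]

/-- `condCost β C x i r` only depends on `x j` for `j ≠ i`. -/
lemma condCost_congr {I R : Type*} [Fintype I] [DecidableEq I] [Fintype R]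
    (β : I → ℝ) (C : R → ℕ → ℝ) {x x' : I → R → ℝ} {i : I}
    (h : ∀ j, j ≠ i → x j = x' j) (r : R) :
    condCost β C x i r = condCost β C x' i r := by
  unfold condCost
  refine Finset.sum_congr rfl fun A hA => ?_
  have hA' : A ⊆ (univ : Finset I).erase i := Finset.mem_powerset.mp hA
  congr 1
  congr 1
  · exact Finset.prod_congr rfl fun j hj =>
      logitProb_congr β (h j (Finset.mem_erase.mp (hA' hj)).1) r
  · exact Finset.prod_congr rfl fun j hj => by
      rw [logitProb_congr β (h j (Finset.mem_erase.mp (Finset.mem_sdiff.mp hj).1).1) r]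

/-- `lambdaCost β C x i k r` only depends on `x j` for `j ∉ {i, k}`. -/
lemma lambdaCost_congr {I R : Type*} [Fintype I] [DecidableEq I] [Fintype R]
    (β : I → ℝ) (C : R → ℕ → ℝ) {x x' : I → R → ℝ} {i k : I}
    (h : ∀ j, j ≠ i → j ≠ k → x j = x' j) (r : R) :
    lambdaCost β C x i k r = lambdaCost β C x' i k r := by
  unfold lambdaCost
  by_cases hki : k = i
  · simp [hki]
  · rw [if_neg hki, if_neg hki]
    refine Finset.sum_congr rfl fun A hA => ?_
    have hA' : A ⊆ ((univ : Finset I).erase i).erase k := Finset.mem_powerset.mp hA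
    congr 1
    congr 1
    · refine Finset.prod_congr rfl fun j hj => ?_
      have hj' := Finset.mem_erase.mp (hA' hj)
      exact logitProb_congr β (h j (Finset.mem_erase.mp hj'.2).1 hj'.1) r
    · refine Finset.prod_congr rfl fun j hj => ?_
      have hj' := Finset.mem_erase.mp (Finset.mem_sdiff.mp hj).1
      rw [logitProb_congr β (h j (Finset.mem_erase.mp hj'.2).1 hj'.1) r]

/-- Derivative of the Logit probability with respect to one coordinate. -/
lemma hasDerivAt_logit {I R : Type*} [DecidableEq I] [Fintype R] [DecidableEq R] [Nonempty R]
    (β : I → ℝ) (x : I → R → ℝ) (k : I) (s r' : R) :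
    HasDerivAt (fun t => logitProb β (Function.update x k (Function.update (x k) s t)) k r')
      (β k * logitProb β x k r' * (logitProb β x k s - if r' = s then 1 else 0)) (x k s) := by
  have hfun : (fun t => logitProb β (Function.update x k (Function.update (x k) s t)) k r')
      = fun t => Real.exp (-(β k) * (if r' = s then t else x k r')) /
          ∑ u : R, Real.exp (-(β k) * (if u = s then t else x k u)) := by
    funext t
    simp [logitProb, Function.update_self, Function.update_apply]
  rw [hfun]
  set t₀ := x k s with ht₀
  have hnum : HasDerivAt (fun t => Real.exp (-(β k) * (if r' = s then t else x k r')))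
      (if r' = s then Real.exp (-(β k) * t₀) * (-(β k)) else 0) t₀ := by
    by_cases h : r' = s
    · simpa [h] using (((hasDerivAt_id t₀).const_mul (-(β k))).exp)
    · simpa [h] using hasDerivAt_const t₀ (Real.exp (-(β k) * x k r'))
  have hden : HasDerivAt (fun t => ∑ u : R, Real.exp (-(β k) * (if u = s then t else x k u)))
      (Real.exp (-(β k) * t₀) * (-(β k))) t₀ := by
    have := HasDerivAt.fun_sum (u := (univ : Finset R))
      (A := fun u t => Real.exp (-(β k) * (if u = s then t else x k u)))
      (A' := fun u => if u = s then Real.exp (-(β k) * t₀) * (-(β k)) else 0)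
      (x := t₀) ?_
    · simpa using this
    · intro u _
      by_cases h : u = s
      · simpa [h] using (((hasDerivAt_id t₀).const_mul (-(β k))).exp)
      · simpa [h] using hasDerivAt_const t₀ (Real.exp (-(β k) * x k u))
  have hDpos : 0 < ∑ u : R, Real.exp (-(β k) * x k u) :=
    Finset.sum_pos (fun u _ => Real.exp_pos _) univ_nonempty
  have hval : ∀ u : R, (if u = s then t₀ else x k u) = x k u := by
    intro u; by_cases h : u = s <;> simp [h, ht₀]
  have hne : (∑ u : R, Real.exp (-(β k) * (if u = s then t₀ else x k u))) ≠ 0 := by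
    simp only [hval]; exact ne_of_gt hDpos
  have H := hnum.div hden hne
  convert H using 1
  case e'_4 => rfl
  case e'_5 => rfl
  case e'_8 => rfl
  simp only [hval]
  rw [ht₀] at *
  set D := ∑ u : R, Real.exp (-(β k) * x k u) with hD
  have hD0 : D ≠ 0 := ne_of_gt hDpos
  simp only [logitProb, ← hD]
  by_cases h : r' = s
  · subst h
    simp only [if_pos rfl]
    field_simp
    simp only [↓reduceIte]
    ring
  · simp only [if_neg h]
    field_simp
    ring

/-- Splitting the expected conditional cost according to the choice of player `k ≠ i`. -/
lemma condCost_split {I R : Type*} [Fintype I] [DecidableEq I] [Fintype R]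
    (β : I → ℝ) (C : R → ℕ → ℝ) (x : I → R → ℝ) {i k : I} (hki : k ≠ i) (r : R) :
    condCost β C x i r =
      (∑ B ∈ (((univ : Finset I).erase i).erase k).powerset,
        (∏ j ∈ B, logitProb β x j r) *
          (∏ j ∈ (((univ : Finset I).erase i).erase k) \ B, (1 - logitProb β x j r)) *
            C r (1 + B.card))
      + logitProb β x k r * lambdaCost β C x i k r := by
  have hk : k ∈ (univ : Finset I).erase i := mem_erase.mpr ⟨hki, mem_univ k⟩
  have hk' : k ∉ ((univ : Finset I).erase i).erase k := notMem_erase _ _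
  have hS : (univ : Finset I).erase i = insert k (((univ : Finset I).erase i).erase k) :=
    (Finset.insert_erase hk).symm
  conv_lhs => rw [condCost, hS, Finset.sum_powerset_insert hk']
  rw [lambdaCost, if_neg hki, Finset.mul_sum,
    ← Finset.sum_add_distrib, ← Finset.sum_add_distrib]
  refine Finset.sum_congr rfl fun B hB => ?_
  have hBS : B ⊆ ((univ : Finset I).erase i).erase k := Finset.mem_powerset.mp hB
  have hBk : k ∉ B := fun h => hk' (hBS h)
  have hkSB : k ∉ (((univ : Finset I).erase i).erase k) \ B := fun h => hk' (Finset.mem_sdiff.mp h).1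
  have h1 : insert k (((univ : Finset I).erase i).erase k) \ B
      = insert k ((((univ : Finset I).erase i).erase k) \ B) :=
    Finset.insert_sdiff_of_notMem _ hBk
  have h2 : insert k (((univ : Finset I).erase i).erase k) \ insert k B
      = (((univ : Finset I).erase i).erase k) \ B := by
    ext j
    simp only [Finset.mem_sdiff, Finset.mem_insert, Finset.mem_erase]
    constructor
    · rintro ⟨hj1 | hj2, hj3⟩
      · exact (hj3 (Or.inl hj1)).elim
      · exact ⟨hj2, fun hjB => hj3 (Or.inr hjB)⟩
    · rintro ⟨hj1, hj2⟩
      exact ⟨Or.inr hj1, by rintro (rfl | hjB); exacts [hj1.1 rfl, hj2 hjB]⟩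
  rw [h1, h2, Finset.prod_insert hkSB, Finset.prod_insert hBk,
    Finset.card_insert_of_notMem hBk]
  have : 1 + (B.card + 1) = 2 + B.card := by omega
  rw [this]
  ring

/-- At a rest point `x*` of the mean field dynamics, the partial derivative of `G^{ir}`
with respect to the coordinate `x^{ks}` equals
`π^{ir}(x*) (β_k π^{kr}(x*)(π^{ks}(x*) - δ_{rs}) Λ^r_{ik}(x*) - δ_{ik} δ_{rs})`. -/
theorem jacobian_at_rest_point {I R : Type*} [Fintype I] [DecidableEq I]
    [Fintype R] [DecidableEq R] [Nonempty R]
    (hI : 2 ≤ Fintype.card I)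
    (β : I → ℝ) (hβ : ∀ i, 0 < β i) (C : R → ℕ → ℝ)
    (x : I → R → ℝ) (hrest : ∀ i r, x i r = condCost β C x i r)
    (i k : I) (r s : R) :
    HasDerivAt
      (fun t : ℝ => meanField β C (Function.update x k (Function.update (x k) s t)) i r)
      (logitProb β x i r *
        (β k * logitProb β x k r * (logitProb β x k s - if r = s then 1 else 0) *
            lambdaCost β C x i k r
          - (if i = k then 1 else 0) * (if r = s then 1 else 0)))
      (x k s) := by
  set Y : ℝ → I → R → ℝ := fun t => Function.update x k (Function.update (x k) s t) with hY
  have hYne : ∀ t (j : I), j ≠ k → Y t j = x j := by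
    intro t j hj; simp [hY, Function.update_of_ne hj]
  by_cases hik : i = k
  · -- player `i = k`
    subst hik
    -- `condCost` at `Y t` does not depend on `t`
    have hcc : ∀ t, condCost β C (Y t) i r = x i r := by
      intro t
      rw [condCost_congr β C (fun j hj => hYne t j hj) r, ← hrest i r]
    by_cases hrs : r = s
    · -- diagonal entry
      subst hrs
      have hf : (fun t : ℝ => meanField β C (Y t) i r)
          = fun t => logitProb β (Y t) i r * (x i r - t) := by
        funext t
        rw [meanField, hcc t]
        congr 2
        simp [hY]
      rw [hf]
      have hp := hasDerivAt_logit β x i r r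
      have hid : HasDerivAt (fun t : ℝ => x i r - t) (-1) (x i r) := by
        simpa using (hasDerivAt_id (x i r)).const_sub (x i r)
      have H := hp.mul hid
      simp only [Function.update_eq_self] at H
      convert H using 1
      case e'_4 => rfl
      case e'_5 => rfl
      case e'_8 => rfl
      have h0 : lambdaCost β C x i i r = 0 := by simp [lambdaCost]
      simp [h0]
    · -- `r ≠ s`: the function is identically zero
      have hf : (fun t : ℝ => meanField β C (Y t) i r) = fun _ => (0 : ℝ) := by
        funext t
        rw [meanField, hcc t]
        have : Y t i r = x i r := by
          simp [hY, Function.update_apply, hrs]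
        rw [this, sub_self, mul_zero]
      rw [hf]
      have h0 : lambdaCost β C x i i r = 0 := by simp [lambdaCost]
      have : logitProb β x i r *
          (β i * logitProb β x i r * (logitProb β x i s - if r = s then 1 else 0) *
            lambdaCost β C x i i r - (if i = i then 1 else 0) * (if r = s then 1 else 0))
          = 0 := by
        simp [h0, hrs]
      rw [this]
      exact hasDerivAt_const _ 0
  · -- player `i ≠ k`
    have hki : k ≠ i := fun h => hik h.symm
    set c0 : ℝ := ∑ B ∈ (((univ : Finset I).erase i).erase k).powerset,
        (∏ j ∈ B, logitProb β x j r) *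
          (∏ j ∈ (((univ : Finset I).erase i).erase k) \ B, (1 - logitProb β x j r)) *
            C r (1 + B.card) with hc0
    set Λ : ℝ := lambdaCost β C x i k r with hΛ
    have hf : (fun t : ℝ => meanField β C (Y t) i r)
        = fun t => logitProb β x i r * (c0 + logitProb β (Y t) k r * Λ - x i r) := by
      funext t
      rw [meanField]
      have h1 : logitProb β (Y t) i r = logitProb β x i r :=
        logitProb_congr β (hYne t i hik) r
      have h2 : Y t i r = x i r := by rw [hYne t i hik]
      have hsum : (∑ B ∈ (((univ : Finset I).erase i).erase k).powerset,
          (∏ j ∈ B, logitProb β (Y t) j r) *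
            (∏ j ∈ (((univ : Finset I).erase i).erase k) \ B, (1 - logitProb β (Y t) j r)) *
              C r (1 + B.card)) = c0 := by
        refine Finset.sum_congr rfl fun B hB => ?_
        have hBS : B ⊆ ((univ : Finset I).erase i).erase k := Finset.mem_powerset.mp hB
        congr 1
        congr 1
        · exact Finset.prod_congr rfl fun j hj =>
            logitProb_congr β (hYne t j (Finset.mem_erase.mp (hBS hj)).1) r
        · exact Finset.prod_congr rfl fun j hj => by
            rw [logitProb_congr β
              (hYne t j (Finset.mem_erase.mp (Finset.mem_sdiff.mp hj).1).1) r]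
      have hlam : lambdaCost β C (Y t) i k r = Λ :=
        lambdaCost_congr β C (fun j _ hj => hYne t j hj) r
      have h3 : condCost β C (Y t) i r = c0 + logitProb β (Y t) k r * Λ := by
        rw [condCost_split β C (Y t) hki r, hsum, hlam]
      rw [h1, h2, h3]
    rw [hf]
    have hp := hasDerivAt_logit β x k s r
    have H := (((hp.mul_const Λ).const_add c0).sub_const (x i r)).const_mul (logitProb β x i r)
    convert H using 1
    case e'_4 => rfl
    case e'_5 => rfl
    simp only [if_neg hik]
    ring
end

section
/- Under the hypotheses below, the characteristic polynomial det(X·I − J) of the 4×4 real matrix J = [[−π¹ᵃ, 0, −β₂z₂π¹ᵃδᵃ, β₂z₂π¹ᵃδᵃ], [0, −π¹ᵇ, β₂z₂π¹ᵇδᵇ, −β₂z₂π¹ᵇδᵇ], [−β₁z₁π²ᵃδᵃ, β₁z₁π²ᵃδᵃ, −π²ᵃ, 0], [β₁z₁π²ᵇδᵇ, −β₁z₁π²ᵇδᵇ, 0, −π²ᵇ]] equals X⁴ + 2X³ + a₂X² + a₃X + a₄, where a₂ = 1 + S − νZY, a₃ = S − νδZP and a₄ = Z(1 − νδ²Z).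 -/
open Polynomial

theorem my_det_fin_four {R : Type*} [CommRing R] (a b c d e f g h i j k l m n o p : R) :
    (!![a,b,c,d; e,f,g,h; i,j,k,l; m,n,o,p] : Matrix (Fin 4) (Fin 4) R).det =
      a*(f*(k*p-l*o)-g*(j*p-l*n)+h*(j*o-k*n))
      - b*(e*(k*p-l*o)-g*(i*p-l*m)+h*(i*o-k*m))
      + c*(e*(j*p-l*n)-f*(i*p-l*m)+h*(i*n-j*m))
      - d*(e*(j*o-k*n)-f*(i*o-k*m)+g*(i*n-j*m)) := by
  rw [Matrix.det_succ_row_zero]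
  simp [Fin.sum_univ_succ, Matrix.det_fin_three, Fin.succAbove, Fin.castSucc,
    Fin.castAdd, Fin.castLE]
  ring

theorem my_charpoly_fin_four {R : Type*} [CommRing R] (M : Matrix (Fin 4) (Fin 4) R) :
    M.charpoly =
      (!![X - C (M 0 0), -C (M 0 1), -C (M 0 2), -C (M 0 3);
          -C (M 1 0), X - C (M 1 1), -C (M 1 2), -C (M 1 3);
          -C (M 2 0), -C (M 2 1), X - C (M 2 2), -C (M 2 3);
          -C (M 3 0), -C (M 3 1), -C (M 3 2), X - C (M 3 3)] :
        Matrix (Fin 4) (Fin 4) R[X]).det := by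
  rw [Matrix.charpoly]
  congr 1
  ext i j
  fin_cases i <;> fin_cases j <;>
    simp [Matrix.charmatrix_apply, Matrix.diagonal]

/-- The characteristic polynomial of the Jacobian of the `2×2` traffic game at a rest
point equals `X⁴ + 2X³ + a₂X² + a₃X + a₄` with `a₂ = 1 + S - νZY`, `a₃ = S - νδZP`,
`a₄ = Z(1 - νδ²Z)`. -/
theorem charpoly_jacobian_2x2
    (δa δb β1 β2 π1a π1b π2a π2b : ℝ)
    (hδa : 0 ≤ δa) (hδb : 0 ≤ δb) (hβ1 : 0 < β1) (hβ2 : 0 < β2)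
    (h1a : 0 < π1a) (h1a' : π1a < 1) (h1b : 0 < π1b) (h1b' : π1b < 1)
    (h2a : 0 < π2a) (h2a' : π2a < 1) (h2b : 0 < π2b) (h2b' : π2b < 1)
    (hsum1 : π1a + π1b = 1) (hsum2 : π2a + π2b = 1)
    (δ ν z1 z2 y1 y2 Z S Y P a2 a3 a4 : ℝ)
    (hδ : δ = δa + δb) (hν : ν = β1 * β2)
    (hz1 : z1 = π1a * π1b) (hz2 : z2 = π2a * π2b)
    (hy1 : y1 = π1a * δa + π1b * δb) (hy2 : y2 = π2a * δa + π2b * δb)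
    (hZ : Z = z1 * z2) (hS : S = z1 + z2) (hY : Y = y1 * y2)
    (hP : P = z1 * y2 + z2 * y1)
    (ha2 : a2 = 1 + S - ν * Z * Y) (ha3 : a3 = S - ν * δ * Z * P)
    (ha4 : a4 = Z * (1 - ν * δ ^ 2 * Z)) :
    (!![-π1a, 0, -β2 * z2 * π1a * δa, β2 * z2 * π1a * δa;
        0, -π1b, β2 * z2 * π1b * δb, -β2 * z2 * π1b * δb;
        -β1 * z1 * π2a * δa, β1 * z1 * π2a * δa, -π2a, 0;
        β1 * z1 * π2b * δb, -β1 * z1 * π2b * δb, 0, -π2b] :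
          Matrix (Fin 4) (Fin 4) ℝ).charpoly
      = X ^ 4 + 2 * X ^ 3 + Polynomial.C a2 * X ^ 2 + Polynomial.C a3 * X
          + Polynomial.C a4 := by
  have hb : π1b = 1 - π1a := by linarith
  have hb2 : π2b = 1 - π2a := by linarith
  subst ha2 ha3 ha4 hP hY hS hZ hy1 hy2 hz1 hz2 hν hδ hb hb2
  rw [my_charpoly_fin_four, my_det_fin_four]
  simp only [Matrix.cons_val', Matrix.cons_val_zero, Matrix.cons_val_one, Matrix.head_cons,
    Matrix.cons_val_fin_one, Matrix.empty_val', Matrix.head_fin_const, Matrix.cons_val_two,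
    Matrix.cons_val_three, Matrix.tail_cons, Matrix.of_apply,
    map_sub, map_add, map_mul, map_neg, map_pow, map_one, map_ofNat, map_zero]
  ring
end

section
/- Under the hypotheses below, the inequalities 2a₂ − a₃ ≥ S + 2a₄/Z and a₃ ≥ S·a₄/Z hold; moreover, if δ > 0 then both inequalities are strict. -/
set_option maxHeartbeats 1000000


/-- Inequalities for the coefficients of the characteristic polynomial:
`2a₂ - a₃ ≥ S + 2a₄/Z` and `a₃ ≥ S·a₄/Z`, strictly when `δ > 0`. -/
theorem coeff_inequalities_2x2
    (δa δb β1 β2 π1a π1b π2a π2b : ℝ)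
    (hδa : 0 ≤ δa) (hδb : 0 ≤ δb) (hβ1 : 0 < β1) (hβ2 : 0 < β2)
    (h1a : 0 < π1a) (h1a' : π1a < 1) (h1b : 0 < π1b) (h1b' : π1b < 1)
    (h2a : 0 < π2a) (h2a' : π2a < 1) (h2b : 0 < π2b) (h2b' : π2b < 1)
    (hsum1 : π1a + π1b = 1) (hsum2 : π2a + π2b = 1)
    (δ ν z1 z2 y1 y2 Z S Y P a2 a3 a4 : ℝ)
    (hδ : δ = δa + δb) (hν : ν = β1 * β2)
    (hz1 : z1 = π1a * π1b) (hz2 : z2 = π2a * π2b)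
    (hy1 : y1 = π1a * δa + π1b * δb) (hy2 : y2 = π2a * δa + π2b * δb)
    (hZ : Z = z1 * z2) (hS : S = z1 + z2) (hY : Y = y1 * y2)
    (hP : P = z1 * y2 + z2 * y1)
    (ha2 : a2 = 1 + S - ν * Z * Y) (ha3 : a3 = S - ν * δ * Z * P)
    (ha4 : a4 = Z * (1 - ν * δ ^ 2 * Z)) :
    (2 * a2 - a3 ≥ S + 2 * a4 / Z ∧ a3 ≥ S * a4 / Z) ∧
      (0 < δ → 2 * a2 - a3 > S + 2 * a4 / Z ∧ a3 > S * a4 / Z) := by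
  have hz1p : 0 < z1 := by rw [hz1]; positivity
  have hz2p : 0 < z2 := by rw [hz2]; positivity
  have hZp : 0 < Z := by rw [hZ]; positivity
  have hνp : 0 < ν := by rw [hν]; positivity
  have hdiv : a4 / Z = 1 - ν * δ ^ 2 * Z := by rw [ha4]; field_simp
  have hδnn : 0 ≤ δ := by rw [hδ]; linarith
  have hy1nn : 0 ≤ y1 := by
    rw [hy1]; exact add_nonneg (mul_nonneg h1a.le hδa) (mul_nonneg h1b.le hδb)
  have hy2nn : 0 ≤ y2 := by
    rw [hy2]; exact add_nonneg (mul_nonneg h2a.le hδa) (mul_nonneg h2b.le hδb)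
  have e1 : δ - y1 = π1b * δa + π1a * δb := by
    rw [hy1, hδ]; linear_combination (-(δa + δb)) * hsum1
  have e2 : δ - y2 = π2b * δa + π2a * δb := by
    rw [hy2, hδ]; linear_combination (-(δa + δb)) * hsum2
  have hd1 : 0 ≤ δ - y1 := by
    rw [e1]; exact add_nonneg (mul_nonneg h1b.le hδa) (mul_nonneg h1a.le hδb)
  have hd2 : 0 ≤ δ - y2 := by
    rw [e2]; exact add_nonneg (mul_nonneg h2b.le hδa) (mul_nonneg h2a.le hδb)
  have key1 : 2 * a2 - a3 = S + 2 * (1 - ν * δ ^ 2 * Z)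
      + ν * Z * (δ * (z1 * y2 + z2 * y1)) + 2 * (ν * Z * (δ ^ 2 - y1 * y2)) := by
    rw [ha2, ha3, hY, hP]; ring
  have key2 : a3 = S * (1 - ν * δ ^ 2 * Z)
      + ν * Z * (δ * (z1 * (δ - y2) + z2 * (δ - y1))) := by
    rw [ha3, hS, hP]; ring
  have hνZ : 0 ≤ ν * Z := (mul_pos hνp hZp).le
  have hsq : δ ^ 2 - y1 * y2 = δ * (δ - y1) + y1 * (δ - y2) := by ring
  have hp1 : 0 ≤ ν * Z * (δ * (z1 * y2 + z2 * y1)) :=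
    mul_nonneg hνZ (mul_nonneg hδnn
      (add_nonneg (mul_nonneg hz1p.le hy2nn) (mul_nonneg hz2p.le hy1nn)))
  have hp2 : 0 ≤ ν * Z * (δ ^ 2 - y1 * y2) := by
    refine mul_nonneg hνZ ?_
    rw [hsq]
    exact add_nonneg (mul_nonneg hδnn hd1) (mul_nonneg hy1nn hd2)
  have hp3 : 0 ≤ ν * Z * (δ * (z1 * (δ - y2) + z2 * (δ - y1))) :=
    mul_nonneg hνZ (mul_nonneg hδnn
      (add_nonneg (mul_nonneg hz1p.le hd2) (mul_nonneg hz2p.le hd1)))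
  constructor
  · constructor
    · rw [ge_iff_le, mul_div_assoc, hdiv, key1]; linarith
    · rw [ge_iff_le, mul_div_assoc, hdiv, key2]; linarith
  · intro hδpos
    have hd1' : 0 < δ - y1 := by
      rw [e1]
      rcases hδa.eq_or_lt with h | h
      · have hb : 0 < δb := by rw [hδ] at hδpos; linarith
        have h1 := mul_pos h1a hb
        have h2 := mul_nonneg h1b.le hδa
        linarith
      · have h1 := mul_pos h1b h
        have h2 := mul_nonneg h1a.le hδb
        linarith
    have hd2' : 0 < δ - y2 := by
      rw [e2]
      rcases hδa.eq_or_lt with h | h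
      · have hb : 0 < δb := by rw [hδ] at hδpos; linarith
        have h1 := mul_pos h2a hb
        have h2 := mul_nonneg h2b.le hδa
        linarith
      · have h1 := mul_pos h2b h
        have h2 := mul_nonneg h2a.le hδb
        linarith
    have hp2' : 0 < ν * Z * (δ ^ 2 - y1 * y2) := by
      refine mul_pos (mul_pos hνp hZp) ?_
      rw [hsq]
      exact add_pos_of_pos_of_nonneg (mul_pos hδpos hd1') (mul_nonneg hy1nn hd2)
    have hp3' : 0 < ν * Z * (δ * (z1 * (δ - y2) + z2 * (δ - y1))) :=
      mul_pos (mul_pos hνp hZp) (mul_pos hδpos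
        (add_pos (mul_pos hz1p hd2') (mul_pos hz2p hd1')))
    constructor
    · rw [gt_iff_lt, mul_div_assoc, hdiv, key1]; linarith
    · rw [gt_iff_lt, mul_div_assoc, hdiv, key2]; linarith
end

section
/- Under the hypotheses below, if a₄ ≥ 0 then 2a₂ − a₃ > 0, a₂ > 0 and a₃ > 0. -/
/-- If `a₄ ≥ 0` then `2a₂ - a₃ > 0`, `a₂ > 0` and `a₃ > 0`. -/
theorem coeff_positivity_2x2
    (δa δb β1 β2 π1a π1b π2a π2b : ℝ)
    (hδa : 0 ≤ δa) (hδb : 0 ≤ δb) (hβ1 : 0 < β1) (hβ2 : 0 < β2)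
    (h1a : 0 < π1a) (h1a' : π1a < 1) (h1b : 0 < π1b) (h1b' : π1b < 1)
    (h2a : 0 < π2a) (h2a' : π2a < 1) (h2b : 0 < π2b) (h2b' : π2b < 1)
    (hsum1 : π1a + π1b = 1) (hsum2 : π2a + π2b = 1)
    (δ ν z1 z2 y1 y2 Z S Y P a2 a3 a4 : ℝ)
    (hδ : δ = δa + δb) (hν : ν = β1 * β2)
    (hz1 : z1 = π1a * π1b) (hz2 : z2 = π2a * π2b)
    (hy1 : y1 = π1a * δa + π1b * δb) (hy2 : y2 = π2a * δa + π2b * δb)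
    (hZ : Z = z1 * z2) (hS : S = z1 + z2) (hY : Y = y1 * y2)
    (hP : P = z1 * y2 + z2 * y1)
    (ha2 : a2 = 1 + S - ν * Z * Y) (ha3 : a3 = S - ν * δ * Z * P)
    (ha4 : a4 = Z * (1 - ν * δ ^ 2 * Z))
    (ha4pos : 0 ≤ a4) :
    2 * a2 - a3 > 0 ∧ a2 > 0 ∧ a3 > 0 := by
  have hz1p : 0 < z1 := by rw [hz1]; positivity
  have hz2p : 0 < z2 := by rw [hz2]; positivity
  have hZp : 0 < Z := by rw [hZ]; positivity
  have hνp : 0 < ν := by rw [hν]; positivity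
  have hSp : 0 < S := by rw [hS]; linarith
  have hδp : 0 ≤ δ := by rw [hδ]; linarith
  have hy1p : 0 ≤ y1 := by rw [hy1]; positivity
  have hy2p : 0 ≤ y2 := by rw [hy2]; positivity
  have hy1le : y1 ≤ δ := by
    rw [hy1, hδ]; nlinarith [mul_nonneg h1b.le hδa, mul_nonneg h1a.le hδb]
  have hy2le : y2 ≤ δ := by
    rw [hy2, hδ]; nlinarith [mul_nonneg h2b.le hδa, mul_nonneg h2a.le hδb]
  have hkey : ν * δ ^ 2 * Z ≤ 1 := by
    by_contra h
    push_neg at h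
    have hneg : Z * (1 - ν * δ ^ 2 * Z) < 0 :=
      mul_neg_of_pos_of_neg hZp (by linarith)
    rw [← ha4] at hneg; linarith
  have hYle : Y ≤ δ ^ 2 := by
    rw [hY, sq]; exact mul_le_mul hy1le hy2le hy2p hδp
  have hνZY : ν * Z * Y ≤ 1 := by
    have h1 : ν * Z * Y ≤ ν * Z * δ ^ 2 :=
      mul_le_mul_of_nonneg_left hYle (by positivity)
    have h2 : ν * Z * δ ^ 2 = ν * δ ^ 2 * Z := by ring
    linarith
  have hPp : 0 ≤ P := by
    rw [hP]; positivity
  have ha2p : 0 < a2 := by rw [ha2]; linarith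
  have hνδZP : 0 ≤ ν * δ * Z * P := by positivity
  refine ⟨by rw [ha2, ha3]; linarith, ha2p, ?_⟩
  rcases eq_or_lt_of_le hδp with hδ0 | hδ0
  · rw [ha3, ← hδ0]; ring_nf; linarith
  · have hy1lt : y1 < δ := by
      rw [hy1, hδ]
      have hab : 0 < δa ∨ 0 < δb := by
        rw [hδ] at hδ0
        rcases lt_or_ge 0 δa with h | h
        · exact Or.inl h
        · exact Or.inr (by linarith)
      have key : δa + δb - (π1a * δa + π1b * δb) = π1b * δa + π1a * δb := by
        have hb : π1b = 1 - π1a := by linarith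
        rw [hb]; ring
      rcases hab with h | h
      · have := mul_pos h1b h
        have := mul_nonneg h1a.le hδb
        linarith
      · have := mul_pos h1a h
        have := mul_nonneg h1b.le hδa
        linarith
    have hPlt : P < δ * S := by
      rw [hP, hS]
      have h1 := mul_lt_mul_of_pos_left hy1lt hz2p
      have h2 := mul_le_mul_of_nonneg_left hy2le hz1p.le
      linarith
    have h2 : ν * δ * Z * P < ν * δ * Z * (δ * S) :=
      mul_lt_mul_of_pos_left hPlt (by positivity)
    have h3 : ν * δ * Z * (δ * S) ≤ S := by
      have h4 := mul_le_mul_of_nonneg_right hkey hSp.le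
      linarith
    rw [ha3]; linarith
end

section
/- Under the hypotheses below, every complex root z of the quartic polynomial X⁴ + 2X³ + a₂X² + a₃X + a₄ satisfies Re z < 0 if and only if ν·δ²·π¹ᵃπ¹ᵇπ²ᵃπ²ᵇ < 1 (equivalently, if and only if a₄ > 0). -/
/-- Core real inequality: for `Re z = x ≥ 0`, the squared modulus of `y·z + d·c`
is at most `d²` times the squared modulus of `z² + z + c`, provided
`y² + 2cd² ≤ d²`. -/
lemma core_ineq (x w d y c : ℝ) (hx : 0 ≤ x) (hy : 0 ≤ y) (hd : 0 ≤ d) (hc0 : 0 ≤ c)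
    (hcon : y ^ 2 + 2 * c * d ^ 2 ≤ d ^ 2) :
    (y * x + d * c) ^ 2 + (y * w) ^ 2
      ≤ d ^ 2 * ((x ^ 2 - w ^ 2 + x + c) ^ 2 + (2 * x * w + w) ^ 2) := by
  have hy2 : y ^ 2 ≤ d ^ 2 := by nlinarith [mul_nonneg hc0 (sq_nonneg d)]
  have hyd : y ≤ d := by nlinarith [sq_nonneg (y - d), sq_nonneg (y + d)]
  have t1 : 0 ≤ x * (d * x + d - y) := by
    apply mul_nonneg hx
    nlinarith [mul_nonneg hd hx]
  have t2 : 0 ≤ d * (x ^ 2 + x + c) + (y * x + d * c) := by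
    have h0 : 0 ≤ x ^ 2 + x + c := by positivity
    nlinarith [mul_nonneg hd h0, mul_nonneg hy hx, mul_nonneg hd hc0]
  have t3 : 0 ≤ 2 * d ^ 2 * x ^ 2 + 2 * d ^ 2 * x + (d ^ 2 - 2 * c * d ^ 2 - y ^ 2) := by
    nlinarith [mul_nonneg (sq_nonneg d) hx, mul_nonneg (sq_nonneg d) (sq_nonneg x)]
  nlinarith [mul_nonneg t1 t2, mul_nonneg (sq_nonneg w) t3,
    mul_nonneg (sq_nonneg d) (sq_nonneg (w * w))]

lemma nsA (c : ℝ) (z : ℂ) :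
    Complex.normSq (z ^ 2 + z + (c : ℂ))
      = (z.re ^ 2 - z.im ^ 2 + z.re + c) ^ 2 + (2 * z.re * z.im + z.im) ^ 2 := by
  simp [Complex.normSq_apply, pow_two, Complex.add_re, Complex.add_im,
    Complex.mul_re, Complex.mul_im]
  ring

lemma nsB (y d c : ℝ) (z : ℂ) :
    Complex.normSq ((y : ℂ) * z + ((d * c : ℝ) : ℂ))
      = (y * z.re + d * c) ^ 2 + (y * z.im) ^ 2 := by
  simp [Complex.normSq_apply, Complex.add_re, Complex.add_im,
    Complex.mul_re, Complex.mul_im]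
  ring

lemma nsA_lb (c x w : ℝ) (hx : 0 ≤ x) (hc0 : 0 ≤ c) (hc : c ≤ 1 / 4) :
    c ^ 2 ≤ (x ^ 2 - w ^ 2 + x + c) ^ 2 + (2 * x * w + w) ^ 2 := by
  have h := core_ineq x w 1 0 c hx le_rfl zero_le_one hc0 (by nlinarith)
  nlinarith [h]

lemma pos_mul_iff_aux (u t : ℝ) (hu : 0 < u) : 0 < u * (1 - t) ↔ t < 1 := by
  constructor
  · intro h
    nlinarith
  · intro h
    exact mul_pos hu (by linarith)

lemma contra_lemma (c d2 nA1 nA2 nB1 nB2 : ℝ) (hc : 0 ≤ c) (hd2 : 0 ≤ d2)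
    (hA1 : 0 < nA1) (hA2 : 0 < nA2)
    (hB1n : 0 ≤ nB1) (hB2n : 0 ≤ nB2)
    (hB1 : nB1 ≤ d2 * nA1) (hB2 : nB2 ≤ d2 * nA2)
    (hEq : nA1 * nA2 = c * c * (nB1 * nB2)) (ht : c * d2 < 1) : False := by
  have hprod : nB1 * nB2 ≤ (d2 * nA1) * (d2 * nA2) :=
    mul_le_mul hB1 hB2 hB2n (by positivity)
  have h1 : nA1 * nA2 ≤ (c * d2) ^ 2 * (nA1 * nA2) := by
    calc nA1 * nA2 = c * c * (nB1 * nB2) := hEq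
      _ ≤ c * c * ((d2 * nA1) * (d2 * nA2)) :=
          mul_le_mul_of_nonneg_left hprod (mul_nonneg hc hc)
      _ = (c * d2) ^ 2 * (nA1 * nA2) := by ring
  have hs : 0 ≤ c * d2 := mul_nonneg hc hd2
  have hs2 : (c * d2) ^ 2 < 1 := by nlinarith
  nlinarith [mul_pos hA1 hA2]

/-- Routh–Hurwitz stability of the rest point: every complex root of the characteristic
quartic `X⁴ + 2X³ + a₂X² + a₃X + a₄` has negative real part if and only if
`ν δ² π¹ᵃπ¹ᵇπ²ᵃπ²ᵇ < 1`, equivalently if and only if `a₄ > 0`. -/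
theorem stability_iff_2x2
    (δa δb β1 β2 π1a π1b π2a π2b : ℝ)
    (hδa : 0 ≤ δa) (hδb : 0 ≤ δb) (hβ1 : 0 < β1) (hβ2 : 0 < β2)
    (h1a : 0 < π1a) (h1a' : π1a < 1) (h1b : 0 < π1b) (h1b' : π1b < 1)
    (h2a : 0 < π2a) (h2a' : π2a < 1) (h2b : 0 < π2b) (h2b' : π2b < 1)
    (hsum1 : π1a + π1b = 1) (hsum2 : π2a + π2b = 1)
    (δ ν z1 z2 y1 y2 Z S Y P a2 a3 a4 : ℝ)
    (hδ : δ = δa + δb) (hν : ν = β1 * β2)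
    (hz1 : z1 = π1a * π1b) (hz2 : z2 = π2a * π2b)
    (hy1 : y1 = π1a * δa + π1b * δb) (hy2 : y2 = π2a * δa + π2b * δb)
    (hZ : Z = z1 * z2) (hS : S = z1 + z2) (hY : Y = y1 * y2)
    (hP : P = z1 * y2 + z2 * y1)
    (ha2 : a2 = 1 + S - ν * Z * Y) (ha3 : a3 = S - ν * δ * Z * P)
    (ha4 : a4 = Z * (1 - ν * δ ^ 2 * Z)) :
    ((∀ z : ℂ, z ^ 4 + 2 * z ^ 3 + (a2 : ℂ) * z ^ 2 + (a3 : ℂ) * z + (a4 : ℂ) = 0 →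
        z.re < 0) ↔ ν * δ ^ 2 * (π1a * π1b * π2a * π2b) < 1) ∧
    ((∀ z : ℂ, z ^ 4 + 2 * z ^ 3 + (a2 : ℂ) * z ^ 2 + (a3 : ℂ) * z + (a4 : ℂ) = 0 →
        z.re < 0) ↔ 0 < a4) := by
  have hz1pos : 0 < z1 := by rw [hz1]; positivity
  have hz2pos : 0 < z2 := by rw [hz2]; positivity
  have hz1q : z1 ≤ 1 / 4 := by
    rw [hz1]; nlinarith only [hsum1, sq_nonneg (π1a - π1b)]
  have hz2q : z2 ≤ 1 / 4 := by
    rw [hz2]; nlinarith only [hsum2, sq_nonneg (π2a - π2b)]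
  have hy1nn : 0 ≤ y1 := by rw [hy1]; positivity
  have hy2nn : 0 ≤ y2 := by rw [hy2]; positivity
  have hδnn : 0 ≤ δ := by rw [hδ]; positivity
  have hνpos : 0 < ν := by rw [hν]; positivity
  have hcon1 : y1 ^ 2 + 2 * z1 * δ ^ 2 ≤ δ ^ 2 := by
    rw [hy1, hz1, hδ]
    have hb : π1b = 1 - π1a := by linarith
    have e1 : (δa + δb) ^ 2 - ((π1a * δa + π1b * δb) ^ 2 + 2 * (π1a * π1b) * (δa + δb) ^ 2)
        = (π1a * δb - π1b * δa) ^ 2 + 2 * (δa * δb) * (π1a ^ 2 + π1b ^ 2) := by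
      rw [hb]; ring
    nlinarith only [e1, sq_nonneg (π1a * δb - π1b * δa),
      mul_nonneg (mul_nonneg hδa hδb) (by positivity : (0:ℝ) ≤ π1a ^ 2 + π1b ^ 2)]
  have hcon2 : y2 ^ 2 + 2 * z2 * δ ^ 2 ≤ δ ^ 2 := by
    rw [hy2, hz2, hδ]
    have hb : π2b = 1 - π2a := by linarith
    have e1 : (δa + δb) ^ 2 - ((π2a * δa + π2b * δb) ^ 2 + 2 * (π2a * π2b) * (δa + δb) ^ 2)
        = (π2a * δb - π2b * δa) ^ 2 + 2 * (δa * δb) * (π2a ^ 2 + π2b ^ 2) := by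
      rw [hb]; ring
    nlinarith only [e1, sq_nonneg (π2a * δb - π2b * δa),
      mul_nonneg (mul_nonneg hδa hδb) (by positivity : (0:ℝ) ≤ π2a ^ 2 + π2b ^ 2)]
  -- the key factorization identity
  have key : ∀ z : ℂ, z ^ 4 + 2 * z ^ 3 + (a2 : ℂ) * z ^ 2 + (a3 : ℂ) * z + (a4 : ℂ)
      = (z ^ 2 + z + (z1 : ℂ)) * (z ^ 2 + z + (z2 : ℂ))
        - ((ν * z1 * z2 : ℝ) : ℂ)
          * (((y1 : ℂ) * z + ((δ * z1 : ℝ) : ℂ)) * ((y2 : ℂ) * z + ((δ * z2 : ℝ) : ℂ))) := by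
    intro z
    rw [ha2, ha3, ha4, hZ, hS, hY, hP]
    push_cast
    ring
  -- main equivalence with 0 < a4
  have main : (∀ z : ℂ, z ^ 4 + 2 * z ^ 3 + (a2 : ℂ) * z ^ 2 + (a3 : ℂ) * z + (a4 : ℂ) = 0 →
      z.re < 0) ↔ 0 < a4 := by
    constructor
    · intro hst
      by_contra h4
      push_neg at h4
      rcases eq_or_lt_of_le h4 with h0 | hneg
      · have := hst 0 (by rw [h0]; norm_num)
        simp at this
      · -- a4 < 0 : real root in [0, M] by IVT
        set f : ℝ → ℝ := fun x => x ^ 4 + 2 * x ^ 3 + a2 * x ^ 2 + a3 * x + a4 with hf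
        have hf0 : f 0 < 0 := by
          show (0:ℝ) ^ 4 + 2 * 0 ^ 3 + a2 * 0 ^ 2 + a3 * 0 + a4 < 0
          nlinarith only [hneg]
        set M : ℝ := 2 + |a2| + |a3| + |a4| with hM
        have hM2 : 2 ≤ M := by
          have n2 := abs_nonneg a2; have n3 := abs_nonneg a3; have n4 := abs_nonneg a4
          rw [hM]; linarith
        have hM0 : (0:ℝ) < M := by linarith
        have hfM : 0 < f M := by
          have hMa2 : |a2| ≤ M - 2 := by
            have n3 := abs_nonneg a3; have n4 := abs_nonneg a4; rw [hM]; linarith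
          have hMa3 : |a3| ≤ M - 2 := by
            have n2 := abs_nonneg a2; have n4 := abs_nonneg a4; rw [hM]; linarith
          have hMa4 : |a4| ≤ M - 2 := by
            have n2 := abs_nonneg a2; have n3 := abs_nonneg a3; rw [hM]; linarith
          have hp2 : 0 ≤ (a2 + (M - 2)) * M ^ 2 :=
            mul_nonneg (by linarith [neg_abs_le a2]) (sq_nonneg M)
          have hp3 : 0 ≤ (a3 + (M - 2)) * M :=
            mul_nonneg (by linarith [neg_abs_le a3]) hM0.le
          have hp4 : - (M - 2) ≤ a4 := by linarith [neg_abs_le a4]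
          show 0 < M ^ 4 + 2 * M ^ 3 + a2 * M ^ 2 + a3 * M + a4
          nlinarith only [hp2, hp3, hp4, hM2, hM0,
            pow_pos hM0 4, pow_pos hM0 3, sq_nonneg M]
        have hcont : ContinuousOn f (Set.Icc 0 M) := by
          apply Continuous.continuousOn
          rw [hf]; fun_prop
        have hmem : (0:ℝ) ∈ Set.Icc (f 0) (f M) := ⟨hf0.le, hfM.le⟩
        obtain ⟨x, hxmem, hfx⟩ := intermediate_value_Icc hM0.le hcont hmem
        have hre := hst (x : ℂ) (by
          have hc : ((f x : ℝ) : ℂ) = 0 := by rw [hfx]; norm_num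
          rw [hf] at hc
          push_cast at hc
          convert hc using 2 <;> push_cast <;> ring)
        rw [Complex.ofReal_re] at hre
        exact absurd hre (not_lt.2 hxmem.1)
    · intro h4 z hroot
      by_contra hre
      push_neg at hre
      have ht : ν * δ ^ 2 * (z1 * z2) < 1 := by
        rw [ha4, hZ] at h4
        exact (pos_mul_iff_aux _ _ (mul_pos hz1pos hz2pos)).mp h4
      -- the factored equation at the root
      have E : (z ^ 2 + z + (z1 : ℂ)) * (z ^ 2 + z + (z2 : ℂ))
          = ((ν * z1 * z2 : ℝ) : ℂ)
            * (((y1 : ℂ) * z + ((δ * z1 : ℝ) : ℂ)) * ((y2 : ℂ) * z + ((δ * z2 : ℝ) : ℂ))) := by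
        have hk := key z
        rw [hroot] at hk
        linear_combination -hk
      have hEq := congrArg Complex.normSq E
      rw [map_mul, map_mul, map_mul, Complex.normSq_ofReal] at hEq
      rw [nsA z1 z, nsA z2 z, nsB y1 δ z1 z, nsB y2 δ z2 z] at hEq
      have hB1 := core_ineq z.re z.im δ y1 z1 hre hy1nn hδnn hz1pos.le hcon1
      have hB2 := core_ineq z.re z.im δ y2 z2 hre hy2nn hδnn hz2pos.le hcon2
      have hA1 := nsA_lb z1 z.re z.im hre hz1pos.le hz1q
      have hA2 := nsA_lb z2 z.re z.im hre hz2pos.le hz2q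
      refine contra_lemma (ν * z1 * z2) (δ ^ 2) _ _ _ _
        (by positivity) (by positivity)
        (lt_of_lt_of_le (by positivity) hA1) (lt_of_lt_of_le (by positivity) hA2)
        (by positivity) (by positivity) hB1 hB2 hEq ?_
      nlinarith only [ht]
  refine ⟨?_, main⟩
  rw [main, ha4, hZ, hz1, hz2]
  rw [show π1a * π1b * (π2a * π2b) = π1a * π1b * π2a * π2b from by ring]
  exact pos_mul_iff_aux _ _ (by positivity)
end

section
/- Under the hypotheses below, if νδ² < 16 then every complex root z of the quartic polynomial X⁴ + 2X³ + a₂X² + a₃X + a₄ satisfies Re z < 0; that is, when νδ² < 16 every rest point of the 2×2 mean-field dynamics is linearly stable. -/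
/-- Key per-factor bound: for `Re λ ≥ 0`,
`z * |y λ + δ z| ≤ (δ/4) * |λ + pa| * |λ + pb|` where `z = pa*pb`, etc. -/
lemma key_bound_aux (δa δb pa : ℝ) (hδa : 0 ≤ δa) (hδb : 0 ≤ δb)
    (hpa : 0 < pa) (hpa' : pa < 1) (lam : ℂ) (hre : 0 ≤ lam.re) :
    (pa * (1 - pa)) *
      norm (((pa * δa + (1 - pa) * δb : ℝ) : ℂ) * lam +
        (((δa + δb) * (pa * (1 - pa)) : ℝ) : ℂ)) ≤
    ((δa + δb) / 4) *
      (norm (lam + (pa : ℂ)) * norm (lam + ((1 - pa : ℝ) : ℂ))) := by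
  have hpb : (0:ℝ) < 1 - pa := by linarith
  set Ba := norm (lam + (pa : ℂ)) with hBa
  set Bb := norm (lam + ((1 - pa : ℝ) : ℂ)) with hBb
  have hBann : 0 ≤ Ba := norm_nonneg _
  have hBbnn : 0 ≤ Bb := norm_nonneg _
  have hA : pa ≤ Ba := by
    have h := Complex.re_le_norm (lam + (pa : ℂ))
    simp only [Complex.add_re, Complex.ofReal_re] at h
    rw [hBa]; linarith
  have hB : 1 - pa ≤ Bb := by
    have h := Complex.re_le_norm (lam + ((1 - pa : ℝ) : ℂ))
    simp only [Complex.add_re, Complex.ofReal_re] at h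
    rw [hBb]; linarith
  have hz : pa * (1 - pa) ≤ 1 / 4 := by nlinarith [sq_nonneg (2 * pa - 1)]
  have hsplit : ((pa * δa + (1 - pa) * δb : ℝ) : ℂ) * lam +
      (((δa + δb) * (pa * (1 - pa)) : ℝ) : ℂ) =
      ((δa * pa : ℝ) : ℂ) * (lam + ((1 - pa : ℝ) : ℂ)) +
      ((δb * (1 - pa) : ℝ) : ℂ) * (lam + (pa : ℂ)) := by
    push_cast; ring
  have habs : norm (((pa * δa + (1 - pa) * δb : ℝ) : ℂ) * lam +
      (((δa + δb) * (pa * (1 - pa)) : ℝ) : ℂ)) ≤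
      δa * pa * Bb + δb * (1 - pa) * Ba := by
    rw [hsplit]
    refine le_trans (norm_add_le _ _) ?_
    rw [norm_mul, norm_mul, Complex.norm_real, Complex.norm_real, Real.norm_eq_abs, Real.norm_eq_abs,
      abs_of_nonneg (mul_nonneg hδa hpa.le), abs_of_nonneg (mul_nonneg hδb hpb.le)]
  have t1 : pa * (1 - pa) * pa ≤ (1 / 4) * Ba := by nlinarith
  have t2 : pa * (1 - pa) * (1 - pa) ≤ (1 / 4) * Bb := by nlinarith
  have e1 : pa * (1 - pa) * (δa * pa * Bb) ≤ δa / 4 * (Ba * Bb) := by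
    nlinarith [mul_le_mul_of_nonneg_right t1 (mul_nonneg hδa hBbnn)]
  have e2 : pa * (1 - pa) * (δb * (1 - pa) * Ba) ≤ δb / 4 * (Ba * Bb) := by
    nlinarith [mul_le_mul_of_nonneg_right t2 (mul_nonneg hδb hBann)]
  have hzpos : 0 < pa * (1 - pa) := mul_pos hpa hpb
  have := mul_le_mul_of_nonneg_left habs hzpos.le
  nlinarith [this, e1, e2]

/-- If `νδ² < 16` then every complex root of the characteristic quartic has negative
real part: every rest point of the `2×2` mean field dynamics is linearly stable. -/
theorem stability_small_nu_delta_2x2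
    (δa δb β1 β2 π1a π1b π2a π2b : ℝ)
    (hδa : 0 ≤ δa) (hδb : 0 ≤ δb) (hβ1 : 0 < β1) (hβ2 : 0 < β2)
    (h1a : 0 < π1a) (h1a' : π1a < 1) (h1b : 0 < π1b) (h1b' : π1b < 1)
    (h2a : 0 < π2a) (h2a' : π2a < 1) (h2b : 0 < π2b) (h2b' : π2b < 1)
    (hsum1 : π1a + π1b = 1) (hsum2 : π2a + π2b = 1)
    (δ ν z1 z2 y1 y2 Z S Y P a2 a3 a4 : ℝ)
    (hδ : δ = δa + δb) (hν : ν = β1 * β2)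
    (hz1 : z1 = π1a * π1b) (hz2 : z2 = π2a * π2b)
    (hy1 : y1 = π1a * δa + π1b * δb) (hy2 : y2 = π2a * δa + π2b * δb)
    (hZ : Z = z1 * z2) (hS : S = z1 + z2) (hY : Y = y1 * y2)
    (hP : P = z1 * y2 + z2 * y1)
    (ha2 : a2 = 1 + S - ν * Z * Y) (ha3 : a3 = S - ν * δ * Z * P)
    (ha4 : a4 = Z * (1 - ν * δ ^ 2 * Z))
    (hsmall : ν * δ ^ 2 < 16) :
    ∀ z : ℂ, z ^ 4 + 2 * z ^ 3 + (a2 : ℂ) * z ^ 2 + (a3 : ℂ) * z + (a4 : ℂ) = 0 →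
      z.re < 0 := by
  have hb1 : π1b = 1 - π1a := by linarith
  have hb2 : π2b = 1 - π2a := by linarith
  subst hb1 hb2 hδ hν hz1 hz2 hy1 hy2 hZ hS hY hP ha2 ha3 ha4
  intro lam hlam
  by_contra hre
  push_neg at hre
  -- factorization identity
  have heq : ((lam + (π1a : ℂ)) * (lam + ((1 - π1a : ℝ) : ℂ))) *
      ((lam + (π2a : ℂ)) * (lam + ((1 - π2a : ℝ) : ℂ))) =
      ((β1 * β2 * (π1a * (1 - π1a)) * (π2a * (1 - π2a)) : ℝ) : ℂ) *
      ((((π1a * δa + (1 - π1a) * δb : ℝ) : ℂ) * lam +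
          (((δa + δb) * (π1a * (1 - π1a)) : ℝ) : ℂ)) *
        (((π2a * δa + (1 - π2a) * δb : ℝ) : ℂ) * lam +
          (((δa + δb) * (π2a * (1 - π2a)) : ℝ) : ℂ))) := by
    push_cast at hlam ⊢
    linear_combination hlam
  -- take absolute values
  have habs := congrArg norm heq
  simp only [norm_mul, Complex.norm_real, Real.norm_eq_abs] at habs
  have hcnn : (0:ℝ) < β1 * β2 * (π1a * (1 - π1a)) * (π2a * (1 - π2a)) :=
    mul_pos (mul_pos (mul_pos hβ1 hβ2) (mul_pos h1a (by linarith)))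
      (mul_pos h2a (by linarith))
  rw [show |β1| * |β2| * (|π1a| * |1 - π1a|) * (|π2a| * |1 - π2a|) = β1 * β2 * (π1a * (1 - π1a)) * (π2a * (1 - π2a)) by rw [abs_of_pos hβ1, abs_of_pos hβ2, abs_of_pos h1a, abs_of_pos h1b, abs_of_pos h2a, abs_of_pos h2b]] at habs
  set Ba1 := norm (lam + (π1a : ℂ)) with hBa1
  set Bb1 := norm (lam + ((1 - π1a : ℝ) : ℂ)) with hBb1
  set Ba2 := norm (lam + (π2a : ℂ)) with hBa2
  set Bb2 := norm (lam + ((1 - π2a : ℝ) : ℂ)) with hBb2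
  set R1 := norm (((π1a * δa + (1 - π1a) * δb : ℝ) : ℂ) * lam +
      (((δa + δb) * (π1a * (1 - π1a)) : ℝ) : ℂ)) with hR1
  set R2 := norm (((π2a * δa + (1 - π2a) * δb : ℝ) : ℂ) * lam +
      (((δa + δb) * (π2a * (1 - π2a)) : ℝ) : ℂ)) with hR2
  have k1 := key_bound_aux δa δb π1a hδa hδb h1a h1a' lam hre
  have k2 := key_bound_aux δa δb π2a hδa hδb h2a h2a' lam hre
  rw [← hBa1, ← hBb1, ← hR1] at k1
  rw [← hBa2, ← hBb2, ← hR2] at k2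
  -- positivity of the q factors
  have hpos : ∀ p : ℝ, 0 < p → 0 < norm (lam + (p : ℂ)) := by
    intro p hp
    refine norm_pos_iff.mpr ?_
    intro h0
    have := congrArg Complex.re h0
    simp only [Complex.add_re, Complex.ofReal_re, Complex.zero_re] at this
    linarith
  have hQ1 : 0 < Ba1 * Bb1 := mul_pos (hpos _ h1a) (by
    have := hpos (1 - π1a) (by linarith); rw [hBb1]; exact_mod_cast this)
  have hQ2 : 0 < Ba2 * Bb2 := mul_pos (hpos _ h2a) (by
    have := hpos (1 - π2a) (by linarith); rw [hBb2]; exact_mod_cast this)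
  have hR1nn : 0 ≤ R1 := norm_nonneg _
  have hR2nn : 0 ≤ R2 := norm_nonneg _
  have hz1nn : (0:ℝ) < π1a * (1 - π1a) := mul_pos h1a (by linarith)
  have hz2nn : (0:ℝ) < π2a * (1 - π2a) := mul_pos h2a (by linarith)
  have hδnn : (0:ℝ) ≤ δa + δb := by linarith
  -- combine
  have hmul : (π1a * (1 - π1a)) * R1 * ((π2a * (1 - π2a)) * R2) ≤
      ((δa + δb) / 4 * (Ba1 * Bb1)) * ((δa + δb) / 4 * (Ba2 * Bb2)) :=
    mul_le_mul k1 k2 (mul_nonneg hz2nn.le hR2nn)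
      (mul_nonneg (by positivity) (mul_nonneg (norm_nonneg _) (norm_nonneg _)))
  have hνnn : (0:ℝ) < β1 * β2 := mul_pos hβ1 hβ2
  nlinarith [mul_le_mul_of_nonneg_left hmul hνnn.le, mul_pos hQ1 hQ2, habs,
    mul_pos hνnn (mul_pos hQ1 hQ2), hsmall]
end

section
/- A point x ∈ ℝ⁴ satisfies G(x) = 0 if and only if there exists w ∈ ℝ with ψ(w) = w and x = X(w), where X(w) = ( C₁ᵃ + δᵃ·ρ(β₂φ(w)), C₂ᵇ − δᵇ·ρ(β₂φ(w)), C₁ᵃ + δᵃ·ρ(w), C₂ᵇ − δᵇ·ρ(w) ). In particular the rest points of the 2×2 mean-field dynamics are in one-to-one correspondence with the fixed points of ψ via w = β₁(x¹ᵃ − x¹ᵇ). -/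
/-- `ρ(w) = 1/(1 + e^w)`. -/
noncomputable def logitρ (w : ℝ) : ℝ := 1 / (1 + Real.exp w)

/-- `φ(w) = κ + δ ρ(w)`. -/
noncomputable def mapφ (κ δ w : ℝ) : ℝ := κ + δ * logitρ w

/-- `ψ(w) = β₁ φ(β₂ φ(w))`. -/
noncomputable def mapψ (κ δ β1 β2 w : ℝ) : ℝ := β1 * mapφ κ δ (β2 * mapφ κ δ w)

/-- The mean field vector field `G` of the `2×2` traffic game, on coordinates
`(x¹ᵃ, x¹ᵇ, x²ᵃ, x²ᵇ)`. -/
noncomputable def meanField2x2 (C1a C2a C1b C2b β1 β2 : ℝ) (x : ℝ × ℝ × ℝ × ℝ) :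
    ℝ × ℝ × ℝ × ℝ :=
  (logitρ (β1 * (x.1 - x.2.1)) * (C1a + (C2a - C1a) * logitρ (β2 * (x.2.2.1 - x.2.2.2)) - x.1),
   (1 - logitρ (β1 * (x.1 - x.2.1))) *
     (C2b - (C2b - C1b) * logitρ (β2 * (x.2.2.1 - x.2.2.2)) - x.2.1),
   logitρ (β2 * (x.2.2.1 - x.2.2.2)) * (C1a + (C2a - C1a) * logitρ (β1 * (x.1 - x.2.1)) - x.2.2.1),
   (1 - logitρ (β2 * (x.2.2.1 - x.2.2.2))) *
     (C2b - (C2b - C1b) * logitρ (β1 * (x.1 - x.2.1)) - x.2.2.2))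

/-- The parametrization `X(w)` of candidate rest points by the fixed points of `ψ`. -/
noncomputable def restPointOfW (C1a C2a C1b C2b β2 : ℝ) (w : ℝ) : ℝ × ℝ × ℝ × ℝ :=
  (C1a + (C2a - C1a) * logitρ (β2 * mapφ (C1a - C2b) ((C2a - C1a) + (C2b - C1b)) w),
   C2b - (C2b - C1b) * logitρ (β2 * mapφ (C1a - C2b) ((C2a - C1a) + (C2b - C1b)) w),
   C1a + (C2a - C1a) * logitρ w,
   C2b - (C2b - C1b) * logitρ w)

lemma logitρ_pos (w : ℝ) : 0 < logitρ w := by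
  unfold logitρ
  have := Real.exp_pos w
  positivity

lemma one_sub_logitρ_pos (w : ℝ) : 0 < 1 - logitρ w := by
  unfold logitρ
  rw [sub_pos, div_lt_one (by positivity)]
  linarith [Real.exp_pos w]

/-- `x` is a rest point of the `2×2` mean field dynamics iff `x = X(w)` for a fixed
point `w` of `ψ`; the correspondence is given by `w = β₁(x¹ᵃ - x¹ᵇ)`. -/
theorem rest_points_iff_fixed_points_of_psi
    (C1a C2a C1b C2b β1 β2 : ℝ) (hca : C1a ≤ C2a) (hcb : C1b ≤ C2b)
    (hβ1 : 0 < β1) (hβ2 : 0 < β2) (x : ℝ × ℝ × ℝ × ℝ) :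
    meanField2x2 C1a C2a C1b C2b β1 β2 x = 0 ↔
      ∃ w : ℝ, mapψ (C1a - C2b) ((C2a - C1a) + (C2b - C1b)) β1 β2 w = w ∧
        x = restPointOfW C1a C2a C1b C2b β2 w ∧ w = β1 * (x.1 - x.2.1) := by
  set κ := C1a - C2b with hκ
  set δ := (C2a - C1a) + (C2b - C1b) with hδ
  constructor
  · intro h
    have h1 := congrArg Prod.fst h
    have h2 := congrArg (fun p : ℝ × ℝ × ℝ × ℝ => p.2.1) h
    have h3 := congrArg (fun p : ℝ × ℝ × ℝ × ℝ => p.2.2.1) h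
    have h4 := congrArg (fun p : ℝ × ℝ × ℝ × ℝ => p.2.2.2) h
    simp only [meanField2x2, Prod.fst_zero, Prod.snd_zero] at h1 h2 h3 h4
    have e1 : C1a + (C2a - C1a) * logitρ (β2 * (x.2.2.1 - x.2.2.2)) - x.1 = 0 :=
      (mul_eq_zero.mp h1).resolve_left (logitρ_pos _).ne'
    have e2 : C2b - (C2b - C1b) * logitρ (β2 * (x.2.2.1 - x.2.2.2)) - x.2.1 = 0 :=
      (mul_eq_zero.mp h2).resolve_left (one_sub_logitρ_pos _).ne'
    have e3 : C1a + (C2a - C1a) * logitρ (β1 * (x.1 - x.2.1)) - x.2.2.1 = 0 :=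
      (mul_eq_zero.mp h3).resolve_left (logitρ_pos _).ne'
    have e4 : C2b - (C2b - C1b) * logitρ (β1 * (x.1 - x.2.1)) - x.2.2.2 = 0 :=
      (mul_eq_zero.mp h4).resolve_left (one_sub_logitρ_pos _).ne'
    refine ⟨β1 * (x.1 - x.2.1), ?_, ?_, rfl⟩
    · have hφ1 : mapφ κ δ (β1 * (x.1 - x.2.1)) = x.2.2.1 - x.2.2.2 := by
        unfold mapφ; rw [hκ, hδ]; linarith
      unfold mapψ
      rw [hφ1]
      unfold mapφ
      rw [hκ, hδ]
      have : κ + δ * logitρ (β2 * (x.2.2.1 - x.2.2.2)) = x.1 - x.2.1 := by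
        rw [hκ, hδ]; linarith
      rw [hκ, hδ] at this
      rw [this]
    · have hφ1 : mapφ κ δ (β1 * (x.1 - x.2.1)) = x.2.2.1 - x.2.2.2 := by
        unfold mapφ; rw [hκ, hδ]; linarith
      unfold restPointOfW
      rw [← hκ, ← hδ, hφ1]
      ext <;> simp <;> linarith
  · rintro ⟨w, hψ, hx, hw⟩
    subst hx
    have hφ1 : κ + δ * logitρ w =
        (restPointOfW C1a C2a C1b C2b β2 w).2.2.1 -
          (restPointOfW C1a C2a C1b C2b β2 w).2.2.2 := by
      unfold restPointOfW; rw [hκ, hδ]; ring_nf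
    have harg2 : β2 * ((restPointOfW C1a C2a C1b C2b β2 w).2.2.1 -
        (restPointOfW C1a C2a C1b C2b β2 w).2.2.2) = β2 * mapφ κ δ w := by
      rw [← hφ1]; unfold mapφ; ring
    have hφ2 : (restPointOfW C1a C2a C1b C2b β2 w).1 -
        (restPointOfW C1a C2a C1b C2b β2 w).2.1 = mapφ κ δ (β2 * mapφ κ δ w) := by
      rw [hκ, hδ]; unfold restPointOfW mapφ; ring
    have harg1 : β1 * ((restPointOfW C1a C2a C1b C2b β2 w).1 -
        (restPointOfW C1a C2a C1b C2b β2 w).2.1) = w := by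
      rw [hφ2]; exact hψ
    unfold meanField2x2
    rw [harg1, harg2]
    have hz : (0 : ℝ × ℝ × ℝ × ℝ) = (0, 0, 0, 0) := rfl
    rw [hz]
    refine Prod.ext ?_ (Prod.ext ?_ (Prod.ext ?_ ?_)) <;>
      · show _ * _ = (0 : ℝ)
        unfold restPointOfW
        rw [← hκ, ← hδ]
        ring
end

section
/- The set {w ∈ ℝ : ψ(w) = w} of fixed points of ψ is nonempty and contains at most three elements. -/
namespace FPAux
open Real Set

noncomputable def sfun (w : ℝ) : ℝ := Real.exp w / (1 + Real.exp w) ^ 2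
noncomputable def Fm (κ δ β2 w : ℝ) : ℝ := β2 * mapφ κ δ w

lemma one_add_exp_pos (w : ℝ) : 0 < 1 + Real.exp w := by positivity
lemma one_add_exp_ne (w : ℝ) : 1 + Real.exp w ≠ 0 := (one_add_exp_pos w).ne'
lemma sfun_pos (w : ℝ) : 0 < sfun w := by unfold sfun; positivity

lemma hasDerivAt_logit (w : ℝ) : HasDerivAt logitρ (-sfun w) w := by
  have h : HasDerivAt (fun y => (1 + Real.exp y)⁻¹)
      (-(Real.exp w) / (1 + Real.exp w) ^ 2) w :=
    ((Real.hasDerivAt_exp w).const_add 1).inv (one_add_exp_ne w)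
  have he : logitρ = fun y => (1 + Real.exp y)⁻¹ := by
    funext y; simp [logitρ, one_div]
  rw [he]
  simpa [sfun, neg_div] using h

lemma hasDerivAt_F (κ δ β2 : ℝ) (w : ℝ) :
    HasDerivAt (Fm κ δ β2) (-(β2 * δ * sfun w)) w := by
  have h := (((hasDerivAt_logit w).const_mul δ).const_add κ).const_mul β2
  have : β2 * (δ * -sfun w) = -(β2 * δ * sfun w) := by ring
  rw [this] at h
  exact h

lemma hasDerivAt_psi (κ δ β1 β2 : ℝ) (w : ℝ) :
    HasDerivAt (mapψ κ δ β1 β2)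
      (β1 * β2 * δ ^ 2 * (sfun w * sfun (Fm κ δ β2 w))) w := by
  have hcomp := (hasDerivAt_logit (Fm κ δ β2 w)).comp w (hasDerivAt_F κ δ β2 w)
  have h := ((hcomp.const_mul δ).const_add κ).const_mul β1
  have : β1 * (δ * (-sfun (Fm κ δ β2 w) * -(β2 * δ * sfun w)))
      = β1 * β2 * δ ^ 2 * (sfun w * sfun (Fm κ δ β2 w)) := by ring
  rw [this] at h
  exact h

end FPAux

namespace FPAux

lemma hasDerivAt_sfun (w : ℝ) :
    HasDerivAt sfun (sfun w * ((1 - Real.exp w) / (1 + Real.exp w))) w := by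
  have h1 := Real.hasDerivAt_exp w
  have h2 : HasDerivAt (fun y => (1 + Real.exp y) ^ 2)
      ((2 : ℕ) * (1 + Real.exp w) ^ 1 * Real.exp w) w := (h1.const_add 1).pow 2
  have h3 := h1.div h2 (by positivity)
  have he : sfun = fun y => Real.exp y / (1 + Real.exp y) ^ 2 := rfl
  rw [he]
  refine h3.congr_deriv (Eq.symm ?_)
  have := one_add_exp_ne w
  field_simp [sfun]
  ring

noncomputable def Mf (κ δ β2 w : ℝ) : ℝ := sfun w * sfun (Fm κ δ β2 w)
noncomputable def Nf (κ δ β2 w : ℝ) : ℝ :=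
  (Real.exp (-w) - Real.exp w) - β2 * δ * (2 * logitρ (Fm κ δ β2 w) - 1)

lemma hasDerivAt_M (κ δ β2 : ℝ) (w : ℝ) :
    HasDerivAt (Mf κ δ β2) (Mf κ δ β2 w * (sfun w * Nf κ δ β2 w)) w := by
  have hs2 := (hasDerivAt_sfun (Fm κ δ β2 w)).comp w (hasDerivAt_F κ δ β2 w)
  have h := (hasDerivAt_sfun w).mul hs2
  have hMe : Mf κ δ β2 = fun y => sfun y * sfun (Fm κ δ β2 y) := rfl
  rw [hMe]
  refine h.congr_deriv (Eq.symm ?_)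
  have h1 := one_add_exp_ne w
  have h2 := one_add_exp_ne (Fm κ δ β2 w)
  have h3 := (Real.exp_pos w).ne'
  show sfun w * sfun (Fm κ δ β2 w) * (sfun w * Nf κ δ β2 w) = _
  rw [Nf, Real.exp_neg, Function.comp_apply]
  unfold sfun logitρ
  field_simp
  ring

end FPAux

namespace FPAux

lemma logit_antitone : Antitone logitρ := by
  intro a b hab
  unfold logitρ
  exact one_div_le_one_div_of_le (one_add_exp_pos a)
    (by linarith [Real.exp_le_exp.2 hab])

lemma logit_pos (w : ℝ) : 0 < logitρ w := by
  unfold logitρ; positivity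

lemma logit_lt_one (w : ℝ) : logitρ w < 1 := by
  rw [logitρ, div_lt_one (one_add_exp_pos w)]
  linarith [Real.exp_pos w]

lemma Fm_antitone (κ δ β2 : ℝ) (hδ : 0 ≤ δ) (hβ2 : 0 ≤ β2) :
    Antitone (Fm κ δ β2) := by
  intro a b hab
  unfold Fm mapφ
  have := logit_antitone hab
  have h1 : δ * logitρ b ≤ δ * logitρ a := mul_le_mul_of_nonneg_left this hδ
  exact mul_le_mul_of_nonneg_left (by linarith) hβ2

lemma N_strictAnti (κ δ β2 : ℝ) (hδ : 0 ≤ δ) (hβ2 : 0 ≤ β2) :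
    StrictAnti (Nf κ δ β2) := by
  intro a b hab
  have h1 : Real.exp (-b) < Real.exp (-a) := Real.exp_lt_exp.2 (by linarith)
  have h2 : Real.exp a < Real.exp b := Real.exp_lt_exp.2 hab
  have h3 : logitρ (Fm κ δ β2 a) ≤ logitρ (Fm κ δ β2 b) :=
    logit_antitone (Fm_antitone κ δ β2 hδ hβ2 hab.le)
  have h4 : β2 * δ * (2 * logitρ (Fm κ δ β2 a) - 1)
      ≤ β2 * δ * (2 * logitρ (Fm κ δ β2 b) - 1) :=
    mul_le_mul_of_nonneg_left (by linarith) (mul_nonneg hβ2 hδ)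
  unfold Nf
  linarith

lemma continuous_logit : Continuous logitρ := by
  unfold logitρ
  exact continuous_const.div (continuous_const.add Real.continuous_exp)
    fun w => one_add_exp_ne w

lemma continuous_sfun : Continuous sfun := by
  unfold sfun
  exact Real.continuous_exp.div ((continuous_const.add Real.continuous_exp).pow 2)
    fun w => by positivity

lemma continuous_Fm (κ δ β2 : ℝ) : Continuous (Fm κ δ β2) := by
  unfold Fm mapφ
  exact continuous_const.mul (continuous_const.add (continuous_const.mul continuous_logit))

lemma continuous_Mf (κ δ β2 : ℝ) : Continuous (Mf κ δ β2) :=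
  continuous_sfun.mul (continuous_sfun.comp (continuous_Fm κ δ β2))

lemma continuous_psi (κ δ β1 β2 : ℝ) : Continuous (mapψ κ δ β1 β2) := by
  unfold mapψ mapφ
  exact continuous_const.mul (continuous_const.add (continuous_const.mul
    (continuous_logit.comp (continuous_const.mul (continuous_const.add
      (continuous_const.mul continuous_logit))))))

end FPAux

namespace FPAux
open Real Set

lemma no_four (κ δ β1 β2 : ℝ) (hδ : 0 < δ) (hβ1 : 0 < β1) (hβ2 : 0 < β2)
    {a b c d : ℝ} (ha : mapψ κ δ β1 β2 a = a) (hb : mapψ κ δ β1 β2 b = b)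
    (hc : mapψ κ δ β1 β2 c = c) (hd : mapψ κ δ β1 β2 d = d)
    (hab : a < b) (hbc : b < c) (hcd : c < d) : False := by
  have hC : (0 : ℝ) < β1 * β2 * δ ^ 2 := by positivity
  have rolle : ∀ u v : ℝ, u < v → mapψ κ δ β1 β2 u = u → mapψ κ δ β1 β2 v = v →
      ∃ x ∈ Ioo u v, β1 * β2 * δ ^ 2 * Mf κ δ β2 x = 1 := by
    intro u v huv hu hv
    have hgc : Continuous fun w => mapψ κ δ β1 β2 w - w :=
      (continuous_psi κ δ β1 β2).sub continuous_id
    obtain ⟨x, hx, hx0⟩ := exists_deriv_eq_zero huv hgc.continuousOn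
      (by simp [hu, hv])
    refine ⟨x, hx, ?_⟩
    have hd' : HasDerivAt (fun w => mapψ κ δ β1 β2 w - w)
        (β1 * β2 * δ ^ 2 * Mf κ δ β2 x - 1) x :=
      (hasDerivAt_psi κ δ β1 β2 x).sub (hasDerivAt_id x)
    rw [hd'.deriv] at hx0
    linarith
  obtain ⟨x1, hx1, hM1⟩ := rolle a b hab ha hb
  obtain ⟨x2, hx2, hM2⟩ := rolle b c hbc hb hc
  obtain ⟨x3, hx3, hM3⟩ := rolle c d hcd hc hd
  have h12 : x1 < x2 := hx1.2.trans hx2.1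
  have h23 : x2 < x3 := hx2.2.trans hx3.1
  have hM12 : Mf κ δ β2 x1 = Mf κ δ β2 x2 :=
    mul_left_cancel₀ hC.ne' (hM1.trans hM2.symm)
  have hM23 : Mf κ δ β2 x2 = Mf κ δ β2 x3 :=
    mul_left_cancel₀ hC.ne' (hM2.trans hM3.symm)
  have hMpos : ∀ w, 0 < Mf κ δ β2 w := fun w =>
    mul_pos (sfun_pos w) (sfun_pos (Fm κ δ β2 w))
  rcases le_or_gt 0 (Nf κ δ β2 x2) with hN | hN
  · have hmono : StrictMonoOn (Mf κ δ β2) (Icc x1 x2) := by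
      refine strictMonoOn_of_deriv_pos (convex_Icc x1 x2)
        (continuous_Mf κ δ β2).continuousOn (fun w hw => ?_)
      rw [interior_Icc] at hw
      rw [(hasDerivAt_M κ δ β2 w).deriv]
      have hNw : 0 < Nf κ δ β2 w :=
        lt_of_le_of_lt hN (N_strictAnti κ δ β2 hδ.le hβ2.le hw.2)
      exact mul_pos (hMpos w) (mul_pos (sfun_pos w) hNw)
    exact absurd hM12 (hmono (left_mem_Icc.2 h12.le) (right_mem_Icc.2 h12.le) h12).ne
  · have hanti : StrictAntiOn (Mf κ δ β2) (Icc x2 x3) := by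
      refine strictAntiOn_of_deriv_neg (convex_Icc x2 x3)
        (continuous_Mf κ δ β2).continuousOn (fun w hw => ?_)
      rw [interior_Icc] at hw
      rw [(hasDerivAt_M κ δ β2 w).deriv]
      have hNw : Nf κ δ β2 w < 0 :=
        lt_trans (N_strictAnti κ δ β2 hδ.le hβ2.le hw.1) hN
      exact mul_neg_of_pos_of_neg (hMpos w) (mul_neg_of_pos_of_neg (sfun_pos w) hNw)
    exact absurd hM23 (hanti (left_mem_Icc.2 h23.le) (right_mem_Icc.2 h23.le) h23).ne'

end FPAux

/-- The set of fixed points of `ψ` is nonempty and has at most three elements. -/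
theorem fixed_points_psi_card (κ δ β1 β2 : ℝ) (hδ : 0 ≤ δ) (hβ1 : 0 < β1)
    (hβ2 : 0 < β2) :
    {w : ℝ | mapψ κ δ β1 β2 w = w}.Nonempty ∧
      {w : ℝ | mapψ κ δ β1 β2 w = w}.encard ≤ 3 := by
  constructor
  · -- Nonemptiness via the intermediate value theorem
    have hbound : ∀ w, β1 * κ ≤ mapψ κ δ β1 β2 w ∧ mapψ κ δ β1 β2 w ≤ β1 * (κ + δ) := by
      intro w
      have h0 := FPAux.logit_pos (β2 * (κ + δ * logitρ w))
      have h1 := FPAux.logit_lt_one (β2 * (κ + δ * logitρ w))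
      unfold mapψ mapφ
      constructor
      · nlinarith [mul_nonneg (mul_nonneg hβ1.le hδ) h0.le]
      · nlinarith [mul_nonneg hβ1.le hδ]
    set A := β1 * κ - 1 with hA
    set B := β1 * (κ + δ) + 1 with hB
    have hAB : A ≤ B := by nlinarith [mul_nonneg hβ1.le hδ]
    have hcont : ContinuousOn (fun w => mapψ κ δ β1 β2 w - w) (Set.Icc A B) :=
      ((FPAux.continuous_psi κ δ β1 β2).sub continuous_id).continuousOn
    have hvA : (1 : ℝ) ≤ mapψ κ δ β1 β2 A - A := by
      have := (hbound A).1; rw [hA]; linarith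
    have hvB : mapψ κ δ β1 β2 B - B ≤ -1 := by
      have := (hbound B).2; rw [hB]; linarith
    have h0mem : (0 : ℝ) ∈ Set.Icc (mapψ κ δ β1 β2 B - B) (mapψ κ δ β1 β2 A - A) :=
      ⟨by linarith, by linarith⟩
    obtain ⟨w, _, hw⟩ := intermediate_value_Icc' hAB hcont h0mem
    exact ⟨w, sub_eq_zero.1 hw⟩
  · by_contra hlt
    push_neg at hlt
    have h4 : (4 : ℕ∞) ≤ {w : ℝ | mapψ κ δ β1 β2 w = w}.encard := by
      have := Order.add_one_le_of_lt hlt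
      exact (by norm_num : (4:ℕ∞) = 3 + 1).le.trans this
    obtain ⟨t, hts, ht4⟩ := Set.exists_subset_encard_eq h4
    have hfin : t.Finite := Set.finite_of_encard_eq_coe ht4
    have hcard : hfin.toFinset.card = 4 := by
      have h := Set.encard_coe_eq_coe_finsetCard hfin.toFinset
      rw [hfin.coe_toFinset, ht4] at h
      exact_mod_cast h.symm
    set f := hfin.toFinset.orderEmbOfFin hcard with hf
    have hmem : ∀ i : Fin 4, (f i : ℝ) ∈ {w : ℝ | mapψ κ δ β1 β2 w = w} := fun i =>
      hts (hfin.mem_toFinset.1 (hfin.toFinset.orderEmbOfFin_mem hcard i))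
    have h01 : f 0 < f 1 := f.strictMono (by decide)
    have h12 : f 1 < f 2 := f.strictMono (by decide)
    have h23 : f 2 < f 3 := f.strictMono (by decide)
    have hmem' : ∀ i : Fin 4, mapψ κ δ β1 β2 (f i) = f i := fun i => hmem i
    rcases hδ.eq_or_lt with hδ0 | hδ0
    · have hconst : ∀ w, mapψ κ δ β1 β2 w = β1 * κ := by
        intro w
        simp only [mapψ, mapφ]
        rw [hδ0.symm]
        ring
      have heq : (f 0 : ℝ) = f 1 :=
        (hmem' 0).symm.trans ((hconst (f 0)).trans
          ((hconst (f 1)).symm.trans (hmem' 1)))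
      exact absurd heq h01.ne
    · exact FPAux.no_four κ δ β1 β2 hδ0 hβ1 hβ2
        (hmem' 0) (hmem' 1) (hmem' 2) (hmem' 3) h01 h12 h23
end

section
/- Exactly one of the following three mutually exclusive situations occurs: (a) ψ has a unique fixed point w̄, and ψ'(w̄) ≤ 1; (b) ψ has exactly two fixed points w₋ < w₊, and either ψ'(w₋) < 1 = ψ'(w₊) or ψ'(w₊) < 1 = ψ'(w₋); (c) ψ has exactly three fixed points w₋ < w̄ < w₊, with ψ'(w₋) < 1, ψ'(w₊) < 1 and ψ'(w̄) > 1. -/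
noncomputable def sig (w : ℝ) : ℝ := Real.exp w / (1 + Real.exp w)

lemma one_add_exp_pos (w : ℝ) : 0 < 1 + Real.exp w := by positivity

lemma one_add_exp_ne (w : ℝ) : 1 + Real.exp w ≠ 0 := (one_add_exp_pos w).ne'

lemma sig_pos (w : ℝ) : 0 < sig w := div_pos (Real.exp_pos w) (one_add_exp_pos w)

lemma sig_lt_one (w : ℝ) : sig w < 1 := by
  rw [sig, div_lt_one (one_add_exp_pos w)]; linarith

lemma logitρ_eq (w : ℝ) : logitρ w = 1 - sig w := by
  rw [logitρ, sig]; field_simp; ring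

lemma hasDerivAt_sig (w : ℝ) : HasDerivAt sig (sig w * (1 - sig w)) w := by
  have h : HasDerivAt (fun w => Real.exp w / (1 + Real.exp w))
      ((Real.exp w * (1 + Real.exp w) - Real.exp w * (0 + Real.exp w)) / (1 + Real.exp w)^2) w :=
    (Real.hasDerivAt_exp w).div ((hasDerivAt_const w 1).add (Real.hasDerivAt_exp w))
      (one_add_exp_ne w)
  convert h using 1
  all_goals unfold sig
  have := one_add_exp_ne w
  field_simp
  ring_nf
  have h2 : 1 + Real.exp w * 2 + Real.exp w ^ 2 = (1 + Real.exp w)^2 := by ring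
  rw [h2]; field_simp; ring

lemma hasDerivAt_logitρ (w : ℝ) : HasDerivAt logitρ (-(sig w * (1 - sig w))) w := by
  have h : HasDerivAt (fun w => 1 - sig w) (-(sig w * (1 - sig w))) w :=
    ((hasDerivAt_sig w).const_sub 1)
  have : logitρ = fun w => 1 - sig w := funext logitρ_eq
  rw [this]; exact h

lemma sig_le_exp (w : ℝ) : sig w ≤ Real.exp w := by
  rw [sig]
  have h := one_add_exp_pos w
  rw [div_le_iff₀ h]
  nlinarith [Real.exp_pos w]

lemma one_sub_sig_le (w : ℝ) : 1 - sig w ≤ Real.exp (-w) := by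
  have h := one_add_exp_pos w
  have he : Real.exp (-w) * Real.exp w = 1 := by
    rw [← Real.exp_add]; simp
  have hx : sig w = Real.exp w / (1 + Real.exp w) := rfl
  rw [hx]
  have h2 : 1 - Real.exp w / (1 + Real.exp w) = 1 / (1 + Real.exp w) := by field_simp; ring
  rw [h2, div_le_iff₀ h]
  nlinarith [Real.exp_pos w, Real.exp_pos (-w)]

noncomputable def vmap (κ δ β2 w : ℝ) : ℝ := β2 * mapφ κ δ w

noncomputable def Pd (κ δ β1 β2 w : ℝ) : ℝ :=
  β1 * β2 * δ^2 * (sig w * (1 - sig w)) *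
    (sig (vmap κ δ β2 w) * (1 - sig (vmap κ δ β2 w)))

noncomputable def Gf (κ δ β2 w : ℝ) : ℝ :=
  (1 - 2 * sig w) - (β2 * δ) * (sig w * (1 - sig w)) * (1 - 2 * sig (vmap κ δ β2 w))

noncomputable def Kf (κ δ β2 w : ℝ) : ℝ :=
  2 + (β2 * δ) * (1 - 2 * sig w) * (1 - 2 * sig (vmap κ δ β2 w))
    + 2 * (β2 * δ)^2 * (sig w * (1 - sig w)) *
      (sig (vmap κ δ β2 w) * (1 - sig (vmap κ δ β2 w)))

lemma hasDerivAt_vmap (κ δ β2 w : ℝ) :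
    HasDerivAt (vmap κ δ β2) (-(β2 * δ * (sig w * (1 - sig w)))) w := by
  have h : HasDerivAt (fun w => β2 * (κ + δ * logitρ w))
      (β2 * (δ * (-(sig w * (1 - sig w))))) w :=
    (((hasDerivAt_logitρ w).const_mul δ).const_add κ).const_mul β2
  have he : vmap κ δ β2 = fun w => β2 * (κ + δ * logitρ w) := by
    funext x; rw [vmap, mapφ]
  rw [he]
  convert h using 1; ring

lemma hasDerivAt_mapψ (κ δ β1 β2 w : ℝ) :
    HasDerivAt (mapψ κ δ β1 β2) (Pd κ δ β1 β2 w) w := by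
  have hv := hasDerivAt_vmap κ δ β2 w
  have hl : HasDerivAt (fun w => logitρ (vmap κ δ β2 w))
      (-(sig (vmap κ δ β2 w) * (1 - sig (vmap κ δ β2 w))) *
        (-(β2 * δ * (sig w * (1 - sig w))))) w :=
    (hasDerivAt_logitρ (vmap κ δ β2 w)).comp w hv
  have h : HasDerivAt (fun w => β1 * (κ + δ * logitρ (vmap κ δ β2 w)))
      (β1 * (δ * (-(sig (vmap κ δ β2 w) * (1 - sig (vmap κ δ β2 w))) *
        (-(β2 * δ * (sig w * (1 - sig w))))))) w :=
    ((hl.const_mul δ).const_add κ).const_mul β1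
  have he : mapψ κ δ β1 β2 = fun w => β1 * (κ + δ * logitρ (vmap κ δ β2 w)) := by
    funext x; rw [mapψ, mapφ, vmap]
  rw [he]
  convert h using 1
  rw [Pd]; ring

lemma hasDerivAt_Pd (κ δ β1 β2 w : ℝ) :
    HasDerivAt (Pd κ δ β1 β2) (Pd κ δ β1 β2 w * Gf κ δ β2 w) w := by
  have hv := hasDerivAt_vmap κ δ β2 w
  have hs := hasDerivAt_sig w
  have hsv : HasDerivAt (fun w => sig (vmap κ δ β2 w))
      (sig (vmap κ δ β2 w) * (1 - sig (vmap κ δ β2 w)) *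
        (-(β2 * δ * (sig w * (1 - sig w))))) w :=
    (hasDerivAt_sig (vmap κ δ β2 w)).comp w hv
  have h1 : HasDerivAt (fun w => sig w * (1 - sig w))
      (sig w * (1 - sig w) * (1 - sig w) + sig w * (-(sig w * (1 - sig w)))) w :=
    hs.mul (hs.const_sub 1)
  have h2 : HasDerivAt (fun w => sig (vmap κ δ β2 w) * (1 - sig (vmap κ δ β2 w)))
      ((sig (vmap κ δ β2 w) * (1 - sig (vmap κ δ β2 w)) *
          (-(β2 * δ * (sig w * (1 - sig w))))) * (1 - sig (vmap κ δ β2 w)) +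
        sig (vmap κ δ β2 w) * (-(sig (vmap κ δ β2 w) * (1 - sig (vmap κ δ β2 w)) *
          (-(β2 * δ * (sig w * (1 - sig w))))))) w :=
    hsv.mul (hsv.const_sub 1)
  have h := (h1.const_mul (β1 * β2 * δ^2)).mul h2
  have hval : Pd κ δ β1 β2 w * Gf κ δ β2 w =
      β1 * β2 * δ ^ 2 *
          (sig w * (1 - sig w) * (1 - sig w) + sig w * -(sig w * (1 - sig w))) *
          (sig (vmap κ δ β2 w) * (1 - sig (vmap κ δ β2 w))) +
        β1 * β2 * δ ^ 2 * (sig w * (1 - sig w)) *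
          (sig (vmap κ δ β2 w) * (1 - sig (vmap κ δ β2 w)) *
                -(β2 * δ * (sig w * (1 - sig w))) * (1 - sig (vmap κ δ β2 w)) +
            sig (vmap κ δ β2 w) *
              -(sig (vmap κ δ β2 w) * (1 - sig (vmap κ δ β2 w)) *
                -(β2 * δ * (sig w * (1 - sig w))))) := by
    rw [Pd, Gf]; ring
  rw [hval]
  exact h

lemma hasDerivAt_Gf (κ δ β2 w : ℝ) :
    HasDerivAt (Gf κ δ β2) (-(sig w * (1 - sig w)) * Kf κ δ β2 w) w := by
  have hv := hasDerivAt_vmap κ δ β2 w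
  have hs := hasDerivAt_sig w
  have hsv : HasDerivAt (fun w => sig (vmap κ δ β2 w))
      (sig (vmap κ δ β2 w) * (1 - sig (vmap κ δ β2 w)) *
        (-(β2 * δ * (sig w * (1 - sig w))))) w :=
    (hasDerivAt_sig (vmap κ δ β2 w)).comp w hv
  have h1 : HasDerivAt (fun w => sig w * (1 - sig w))
      (sig w * (1 - sig w) * (1 - sig w) + sig w * (-(sig w * (1 - sig w)))) w :=
    hs.mul (hs.const_sub 1)
  have h2 : HasDerivAt (fun w => 1 - 2 * sig (vmap κ δ β2 w))
      (-(2 * (sig (vmap κ δ β2 w) * (1 - sig (vmap κ δ β2 w)) *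
        (-(β2 * δ * (sig w * (1 - sig w))))))) w :=
    (hsv.const_mul 2).const_sub 1
  have h3 : HasDerivAt (fun w => 1 - 2 * sig w)
      (-(2 * (sig w * (1 - sig w)))) w := (hs.const_mul 2).const_sub 1
  have h := h3.sub ((h1.const_mul (β2 * δ)).mul h2)
  have hval : -(sig w * (1 - sig w)) * Kf κ δ β2 w =
      -(2 * (sig w * (1 - sig w))) -
        (β2 * δ * (sig w * (1 - sig w) * (1 - sig w) + sig w * -(sig w * (1 - sig w))) *
            (1 - 2 * sig (vmap κ δ β2 w)) +
          β2 * δ * (sig w * (1 - sig w)) *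
            -(2 * (sig (vmap κ δ β2 w) * (1 - sig (vmap κ δ β2 w)) *
              -(β2 * δ * (sig w * (1 - sig w)))))) := by
    rw [Kf]; ring
  rw [hval]
  exact h

lemma Kf_pos (κ δ β2 w : ℝ) (hδ : 0 ≤ δ) (hβ2 : 0 < β2)
    (h : Gf κ δ β2 w = 0) : 0 < Kf κ δ β2 w := by
  rw [Gf, sub_eq_zero] at h
  rw [Kf]
  have t1 := sig_pos w
  have t2 := sig_lt_one w
  have s1 := sig_pos (vmap κ δ β2 w)
  have s2 := sig_lt_one (vmap κ δ β2 w)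
  have hc : 0 ≤ β2 * δ := by positivity
  nlinarith [sq_nonneg (1 - 2 * sig (vmap κ δ β2 w)),
    mul_pos t1 (by linarith : (0:ℝ) < 1 - sig w),
    mul_pos s1 (by linarith : (0:ℝ) < 1 - sig (vmap κ δ β2 w)),
    mul_nonneg (mul_nonneg hc t1.le) (by linarith : (0:ℝ) ≤ 1 - sig w),
    sq_nonneg (β2 * δ)]

lemma local_sign {f : ℝ → ℝ} {f' x : ℝ} (hf : HasDerivAt f f' x) (h0 : f x = 0)
    (hneg : f' < 0) :
    (∀ᶠ y in nhdsWithin x (Set.Ioi x), f y < 0) ∧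
      (∀ᶠ y in nhdsWithin x (Set.Iio x), 0 < f y) := by
  have hs : Filter.Tendsto (slope f x) (nhdsWithin x {x}ᶜ) (nhds f') :=
    (hasDerivAt_iff_tendsto_slope).1 hf
  have hev : ∀ᶠ y in nhdsWithin x {x}ᶜ, slope f x y < 0 :=
    hs.eventually_lt_const hneg
  constructor
  · have h1 : ∀ᶠ y in nhdsWithin x (Set.Ioi x), slope f x y < 0 :=
      hev.filter_mono (nhdsWithin_mono x (fun y hy => ne_of_gt hy))
    filter_upwards [h1, self_mem_nhdsWithin] with y hy hmem
    have hyx : 0 < y - x := sub_pos.2 hmem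
    have : f y = slope f x y * (y - x) := by
      rw [slope_def_field, h0, sub_zero, div_mul_cancel₀]
      exact sub_ne_zero.2 (ne_of_gt hmem)
    rw [this]
    exact mul_neg_of_neg_of_pos hy hyx
  · have h1 : ∀ᶠ y in nhdsWithin x (Set.Iio x), slope f x y < 0 :=
      hev.filter_mono (nhdsWithin_mono x (fun y hy => ne_of_lt hy))
    filter_upwards [h1, self_mem_nhdsWithin] with y hy hmem
    have hyx : y - x < 0 := sub_neg.2 hmem
    have : f y = slope f x y * (y - x) := by
      rw [slope_def_field, h0, sub_zero, div_mul_cancel₀]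
      exact sub_ne_zero.2 (ne_of_lt hmem)
    rw [this]
    exact mul_pos_of_neg_of_neg hy hyx

lemma no_two_zeros {f : ℝ → ℝ} (hc : Continuous f)
    (hd : ∀ x, f x = 0 → ∃ d, HasDerivAt f d x ∧ d < 0)
    {a b : ℝ} (hab : a < b) (ha : f a = 0) (hb : f b = 0) : False := by
  obtain ⟨da, hda, hdan⟩ := hd a ha
  obtain ⟨hra, _⟩ := local_sign hda ha hdan
  -- find a' ∈ (a, b) with f a' < 0
  have hIoo : Set.Ioo a b ∈ nhdsWithin a (Set.Ioi a) := Ioo_mem_nhdsGT_of_mem ⟨le_refl a, hab⟩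
  obtain ⟨a', ha'neg, ha'mem⟩ := (hra.and (Filter.eventually_of_mem hIoo (fun y hy => hy))).exists
  -- the set of zeros in [a', b]
  have hScl : IsClosed (Set.Icc a' b ∩ f ⁻¹' {0}) :=
    isClosed_Icc.inter (isClosed_singleton.preimage hc)
  have hSne : (Set.Icc a' b ∩ f ⁻¹' {0}).Nonempty := ⟨b, ⟨ha'mem.2.le, le_refl b⟩, hb⟩
  have hSbdd : BddBelow (Set.Icc a' b ∩ f ⁻¹' {0}) := ⟨a', fun x hx => hx.1.1⟩
  have hcS : sInf (Set.Icc a' b ∩ f ⁻¹' {0}) ∈ Set.Icc a' b ∩ f ⁻¹' {0} :=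
    IsClosed.csInf_mem hScl hSne hSbdd
  generalize hcdef : sInf (Set.Icc a' b ∩ f ⁻¹' {0}) = c at hcS
  have hfc : f c = 0 := hcS.2
  have ha'c : a' < c := lt_of_le_of_ne hcS.1.1 (by rintro rfl; exact absurd hfc (ne_of_lt ha'neg))
  obtain ⟨dc, hdc, hdcn⟩ := hd c hfc
  obtain ⟨_, hlc⟩ := local_sign hdc hfc hdcn
  have hIoo2 : Set.Ioo a' c ∈ nhdsWithin c (Set.Iio c) := Ioo_mem_nhdsLT_of_mem ⟨ha'c, le_refl c⟩
  obtain ⟨y, hypos, hymem⟩ := (hlc.and (Filter.eventually_of_mem hIoo2 (fun z hz => hz))).exists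
  -- IVT on [a', y] gives a zero below c
  have h0mem : (0:ℝ) ∈ Set.Icc (f a') (f y) := ⟨ha'neg.le, hypos.le⟩
  obtain ⟨z, hzmem, hzval⟩ := intermediate_value_Icc hymem.1.le hc.continuousOn h0mem
  have hzS : z ∈ Set.Icc a' b ∩ f ⁻¹' {0} :=
    ⟨⟨hzmem.1, hzmem.2.trans (hymem.2.le.trans hcS.1.2)⟩, hzval⟩
  have : c ≤ z := hcdef ▸ csInf_le hSbdd hzS
  have : z < c := lt_of_le_of_lt hzmem.2 hymem.2
  linarith

lemma crossing_structure {f : ℝ → ℝ} (hc : Continuous f)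
    (hd : ∀ x, f x = 0 → ∃ d, HasDerivAt f d x ∧ d < 0)
    {w0 w1 : ℝ} (h0 : ∀ w ≤ w0, 0 < f w) (h1 : ∀ w, w1 ≤ w → f w < 0) :
    ∃ z : ℝ, (∀ w < z, 0 < f w) ∧ (∀ w, z < w → f w < 0) := by
  have hw01 : w0 < w1 := by
    by_contra h
    push_neg at h
    exact absurd (h0 w1 h) (not_lt.2 (h1 w1 (le_refl w1)).le)
  have h0mem : (0:ℝ) ∈ Set.Icc (f w1) (f w0) := ⟨(h1 w1 (le_refl w1)).le, (h0 w0 (le_refl w0)).le⟩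
  obtain ⟨z, hzmem, hzval⟩ := intermediate_value_Icc' hw01.le hc.continuousOn h0mem
  refine ⟨z, fun w hwz => ?_, fun w hzw => ?_⟩
  · rcases le_or_gt w w0 with hw | hw
    · exact h0 w hw
    · rcases lt_trichotomy (f w) 0 with hneg | hzero | hpos
      · exfalso
        have h0mem2 : (0:ℝ) ∈ Set.Icc (f w) (f w0) := ⟨hneg.le, (h0 w0 (le_refl w0)).le⟩
        obtain ⟨y, hymem, hyval⟩ := intermediate_value_Icc' hw.le hc.continuousOn h0mem2
        exact no_two_zeros hc hd (lt_of_le_of_lt hymem.2 hwz) hyval hzval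
      · exact absurd hzero (fun h => no_two_zeros hc hd hwz h hzval)
      · exact hpos
  · rcases le_or_gt w1 w with hw | hw
    · exact h1 w hw
    · rcases lt_trichotomy (f w) 0 with hneg | hzero | hpos
      · exact hneg
      · exact absurd hzero (fun h => no_two_zeros hc hd hzw hzval h)
      · exfalso
        have h0mem2 : (0:ℝ) ∈ Set.Icc (f w1) (f w) := ⟨(h1 w1 (le_refl w1)).le, hpos.le⟩
        obtain ⟨y, hymem, hyval⟩ := intermediate_value_Icc' hw.le hc.continuousOn h0mem2
        exact no_two_zeros hc hd (lt_of_lt_of_le hzw hymem.1) hzval hyval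

lemma continuous_Gf (κ δ β2 : ℝ) : Continuous (Gf κ δ β2) :=
  continuous_iff_continuousAt.2 fun w => (hasDerivAt_Gf κ δ β2 w).differentiableAt.continuousAt

lemma continuous_Pd (κ δ β1 β2 : ℝ) : Continuous (Pd κ δ β1 β2) :=
  continuous_iff_continuousAt.2 fun w => (hasDerivAt_Pd κ δ β1 β2 w).differentiableAt.continuousAt

lemma continuous_mapψ (κ δ β1 β2 : ℝ) : Continuous (mapψ κ δ β1 β2) :=
  continuous_iff_continuousAt.2 fun w => (hasDerivAt_mapψ κ δ β1 β2 w).differentiableAt.continuousAt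

lemma Gsign (κ δ β2 : ℝ) (hδ : 0 ≤ δ) (hβ2 : 0 < β2) :
    ∃ z : ℝ, (∀ w < z, 0 < Gf κ δ β2 w) ∧ (∀ w, z < w → Gf κ δ β2 w < 0) := by
  have hc : 0 ≤ β2 * δ := by positivity
  have hc3 : (0:ℝ) < 3 + β2 * δ := by linarith
  refine crossing_structure (continuous_Gf κ δ β2) (fun x hx => ?_)
    (w0 := Real.log (1 / (3 + β2 * δ))) (fun w hw => ?_) (w1 := Real.log (3 + β2 * δ))
    (fun w hw => ?_)
  · exact ⟨_, hasDerivAt_Gf κ δ β2 x,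
      mul_neg_of_neg_of_pos (neg_neg_iff_pos.2 (mul_pos (sig_pos x)
        (by linarith [sig_lt_one x]))) (Kf_pos κ δ β2 x hδ hβ2 hx)⟩
  · have ht : sig w ≤ 1 / (3 + β2 * δ) := by
      calc sig w ≤ Real.exp w := sig_le_exp w
      _ ≤ Real.exp (Real.log (1 / (3 + β2 * δ))) := Real.exp_le_exp.2 hw
      _ = 1 / (3 + β2 * δ) := Real.exp_log (by positivity)
    have t1 := sig_pos w
    have t2 := sig_lt_one w
    have s1 := sig_pos (vmap κ δ β2 w)
    have s2 := sig_lt_one (vmap κ δ β2 w)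
    have key : (2 + β2 * δ) * sig w < 1 := by
      calc (2 + β2 * δ) * sig w ≤ (2 + β2 * δ) * (1 / (3 + β2 * δ)) :=
            mul_le_mul_of_nonneg_left ht (by linarith)
        _ < 1 := by rw [mul_one_div, div_lt_one hc3]; linarith
    rw [Gf]
    nlinarith [mul_nonneg (mul_nonneg (mul_nonneg hc t1.le)
        (by linarith : (0:ℝ) ≤ 1 - sig w)) s1.le,
      mul_nonneg (mul_nonneg hc t1.le) t1.le]
  · have ht : 1 - sig w ≤ 1 / (3 + β2 * δ) := by
      calc 1 - sig w ≤ Real.exp (-w) := one_sub_sig_le w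
      _ ≤ Real.exp (-Real.log (3 + β2 * δ)) := Real.exp_le_exp.2 (by linarith)
      _ = 1 / (3 + β2 * δ) := by rw [Real.exp_neg, Real.exp_log hc3]; rw [one_div]
    have t1 := sig_pos w
    have t2 := sig_lt_one w
    have s1 := sig_pos (vmap κ δ β2 w)
    have s2 := sig_lt_one (vmap κ δ β2 w)
    have key : (2 + β2 * δ) * (1 - sig w) < 1 := by
      calc (2 + β2 * δ) * (1 - sig w) ≤ (2 + β2 * δ) * (1 / (3 + β2 * δ)) :=
            mul_le_mul_of_nonneg_left ht (by linarith)
        _ < 1 := by rw [mul_one_div, div_lt_one hc3]; linarith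
    rw [Gf]
    nlinarith [mul_nonneg (mul_nonneg (mul_nonneg hc t1.le)
        (by linarith : (0:ℝ) ≤ 1 - sig w)) (by linarith : (0:ℝ) ≤ 1 - sig (vmap κ δ β2 w)),
      mul_nonneg (mul_nonneg hc (by linarith : (0:ℝ) ≤ 1 - sig w))
        (by linarith : (0:ℝ) ≤ 1 - sig w)]

lemma Pd_pos (κ δ β1 β2 : ℝ) (hδ : 0 < δ) (hβ1 : 0 < β1) (hβ2 : 0 < β2) (w : ℝ) :
    0 < Pd κ δ β1 β2 w := by
  rw [Pd]
  have t1 := sig_pos w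
  have t2 := sig_lt_one w
  have s1 := sig_pos (vmap κ δ β2 w)
  have s2 := sig_lt_one (vmap κ δ β2 w)
  have h1 : (0:ℝ) < 1 - sig w := by linarith
  have h2 : (0:ℝ) < 1 - sig (vmap κ δ β2 w) := by linarith
  positivity

lemma Pd_mono (κ δ β1 β2 : ℝ) (hδ : 0 < δ) (hβ1 : 0 < β1) (hβ2 : 0 < β2) {z : ℝ}
    (hl : ∀ w < z, 0 < Gf κ δ β2 w) (hr : ∀ w, z < w → Gf κ δ β2 w < 0) :
    StrictMonoOn (Pd κ δ β1 β2) (Set.Iic z) ∧ StrictAntiOn (Pd κ δ β1 β2) (Set.Ici z) := by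
  constructor
  · refine strictMonoOn_of_deriv_pos (convex_Iic z) (continuous_Pd κ δ β1 β2).continuousOn
      (fun x hx => ?_)
    rw [interior_Iic] at hx
    rw [(hasDerivAt_Pd κ δ β1 β2 x).deriv]
    exact mul_pos (Pd_pos κ δ β1 β2 hδ hβ1 hβ2 x) (hl x hx)
  · refine strictAntiOn_of_deriv_neg (convex_Ici z) (continuous_Pd κ δ β1 β2).continuousOn
      (fun x hx => ?_)
    rw [interior_Ici] at hx
    rw [(hasDerivAt_Pd κ δ β1 β2 x).deriv]
    exact mul_neg_of_pos_of_neg (Pd_pos κ δ β1 β2 hδ hβ1 hβ2 x) (hr x hx)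

lemma Pd_le_exp (κ δ β1 β2 : ℝ) (hδ : 0 ≤ δ) (hβ1 : 0 < β1) (hβ2 : 0 < β2) (w : ℝ) :
    Pd κ δ β1 β2 w ≤ β1 * β2 * δ^2 * Real.exp w ∧
      Pd κ δ β1 β2 w ≤ β1 * β2 * δ^2 * Real.exp (-w) := by
  have t1 := sig_pos w
  have t2 := sig_lt_one w
  have s1 := sig_pos (vmap κ δ β2 w)
  have s2 := sig_lt_one (vmap κ δ β2 w)
  have hC : (0:ℝ) ≤ β1 * β2 * δ^2 := by positivity
  have hss : sig (vmap κ δ β2 w) * (1 - sig (vmap κ δ β2 w)) ≤ 1 := by nlinarith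
  have hss0 : 0 ≤ sig (vmap κ δ β2 w) * (1 - sig (vmap κ δ β2 w)) := by nlinarith
  constructor
  · have h1 : sig w * (1 - sig w) ≤ Real.exp w := by nlinarith [sig_le_exp w]
    have hX0 : (0:ℝ) ≤ sig w * (1 - sig w) := by nlinarith
    rw [Pd]
    nlinarith [mul_nonneg (mul_nonneg hC hX0) (by linarith :
        (0:ℝ) ≤ 1 - sig (vmap κ δ β2 w) * (1 - sig (vmap κ δ β2 w))),
      mul_nonneg hC (by linarith : (0:ℝ) ≤ Real.exp w - sig w * (1 - sig w))]
  · have h1 : sig w * (1 - sig w) ≤ Real.exp (-w) := by nlinarith [one_sub_sig_le w]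
    have hX0 : (0:ℝ) ≤ sig w * (1 - sig w) := by nlinarith
    rw [Pd]
    nlinarith [mul_nonneg (mul_nonneg hC hX0) (by linarith :
        (0:ℝ) ≤ 1 - sig (vmap κ δ β2 w) * (1 - sig (vmap κ δ β2 w))),
      mul_nonneg hC (by linarith : (0:ℝ) ≤ Real.exp (-w) - sig w * (1 - sig w))]

lemma mapψ_bounds (κ δ β1 β2 : ℝ) (hδ : 0 ≤ δ) (hβ1 : 0 < β1) (w : ℝ) :
    β1 * κ ≤ mapψ κ δ β1 β2 w ∧ mapψ κ δ β1 β2 w ≤ β1 * (κ + δ) := by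
  have h1 := sig_pos (β2 * mapφ κ δ w)
  have h2 := sig_lt_one (β2 * mapφ κ δ w)
  rw [mapψ, mapφ, logitρ_eq]
  constructor
  · nlinarith [mul_nonneg (mul_nonneg hβ1.le hδ)
      (by linarith : (0:ℝ) ≤ 1 - sig (β2 * mapφ κ δ w))]
  · nlinarith [mul_nonneg (mul_nonneg hβ1.le hδ) h1.le]

lemma set_ne_12 {x a b : ℝ} (h : ({x} : Set ℝ) = {a, b}) (hab : a < b) : False := by
  have ha : a ∈ ({x} : Set ℝ) := h ▸ Set.mem_insert a {b}
  have hb : b ∈ ({x} : Set ℝ) := h ▸ Set.mem_insert_of_mem a rfl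
  rw [Set.mem_singleton_iff] at ha hb
  rw [ha, hb] at hab; exact lt_irrefl x hab

lemma set_ne_13 {x a b c : ℝ} (h : ({x} : Set ℝ) = {a, b, c}) (hab : a < b) (hbc : b < c) :
    False := by
  have ha : a ∈ ({x} : Set ℝ) := h ▸ Set.mem_insert a {b, c}
  have hb : b ∈ ({x} : Set ℝ) := h ▸ Set.mem_insert_of_mem a (Set.mem_insert b {c})
  rw [Set.mem_singleton_iff] at ha hb
  rw [ha, hb] at hab; exact lt_irrefl x hab

lemma set_ne_23 {a b x y z : ℝ} (h : ({a, b} : Set ℝ) = {x, y, z}) (hxy : x < y)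
    (hyz : y < z) : False := by
  have hx : x ∈ ({a, b} : Set ℝ) := h ▸ Set.mem_insert x {y, z}
  have hy : y ∈ ({a, b} : Set ℝ) := h ▸ Set.mem_insert_of_mem x (Set.mem_insert y {z})
  have hz : z ∈ ({a, b} : Set ℝ) := h ▸ Set.mem_insert_of_mem x
    (Set.mem_insert_of_mem y rfl)
  simp only [Set.mem_insert_iff, Set.mem_singleton_iff] at hx hy hz
  rcases hx with rfl | rfl <;> rcases hy with rfl | rfl <;> rcases hz with h3 | h3 <;>
    simp_all <;> linarith

/-- Trichotomy for the fixed points of `ψ`: exactly one of the following occurs.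
(a) a unique fixed point `w̄` with `ψ'(w̄) ≤ 1`;
(b) exactly two fixed points `w₋ < w₊` with `ψ' < 1` at one and `ψ' = 1` at the other;
(c) exactly three fixed points `w₋ < w̄ < w₊` with `ψ'(w₋) < 1`, `ψ'(w₊) < 1` and
`ψ'(w̄) > 1`. -/
theorem fixed_points_psi_trichotomy (κ δ β1 β2 : ℝ) (hδ : 0 ≤ δ) (hβ1 : 0 < β1)
    (hβ2 : 0 < β2) :
    let F : Set ℝ := {w : ℝ | mapψ κ δ β1 β2 w = w}
    let D : ℝ → ℝ := deriv (mapψ κ δ β1 β2)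
    let A : Prop := ∃ w : ℝ, F = {w} ∧ D w ≤ 1
    let B : Prop := ∃ wm wp : ℝ, wm < wp ∧ F = {wm, wp} ∧
      ((D wm < 1 ∧ D wp = 1) ∨ (D wp < 1 ∧ D wm = 1))
    let C : Prop := ∃ wm wb wp : ℝ, wm < wb ∧ wb < wp ∧ F = {wm, wb, wp} ∧
      D wm < 1 ∧ D wp < 1 ∧ 1 < D wb
    (A ∧ ¬B ∧ ¬C) ∨ (¬A ∧ B ∧ ¬C) ∨ (¬A ∧ ¬B ∧ C) := by
  intro F D A B C
  have hBdef : B = (∃ wm wp : ℝ, wm < wp ∧ F = {wm, wp} ∧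
      ((D wm < 1 ∧ D wp = 1) ∨ (D wp < 1 ∧ D wm = 1))) := rfl
  have hCdef : C = (∃ wm wb wp : ℝ, wm < wb ∧ wb < wp ∧ F = {wm, wb, wp} ∧
      D wm < 1 ∧ D wp < 1 ∧ 1 < D wb) := rfl
  have hAdef : A = (∃ w : ℝ, F = {w} ∧ D w ≤ 1) := rfl
  rcases eq_or_lt_of_le hδ with hδ0 | hδpos
  · -- δ = 0 : ψ is constant
    have hconst : ∀ w, mapψ κ δ β1 β2 w = β1 * κ := by
      intro w; rw [mapψ, mapφ, ← hδ0]; ring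
    have hF : F = {β1 * κ} := by
      ext w
      rw [Set.mem_singleton_iff]
      show mapψ κ δ β1 β2 w = w ↔ w = β1 * κ
      rw [hconst w]
      exact eq_comm
    have hDc : D (β1 * κ) = 0 := by
      have : mapψ κ δ β1 β2 = fun _ => β1 * κ := funext hconst
      show deriv (mapψ κ δ β1 β2) (β1 * κ) = 0
      rw [this, deriv_const]
    refine Or.inl ⟨?_, ?_, ?_⟩
    · rw [hAdef]; exact ⟨β1 * κ, hF, by rw [hDc]; norm_num⟩
    · rw [hBdef]; rintro ⟨wm, wp, hlt, hFB, -⟩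
      exact set_ne_12 (hF.symm.trans hFB) hlt
    · rw [hCdef]; rintro ⟨x, y, z', h1, h2, hFC, -⟩
      exact set_ne_13 (hF.symm.trans hFC) h1 h2
  · -- δ > 0
    obtain ⟨z, hGl, hGr⟩ := Gsign κ δ β2 hδ hβ2
    obtain ⟨hPmono, hPanti⟩ := Pd_mono κ δ β1 β2 hδpos hβ1 hβ2 hGl hGr
    have hDP : ∀ w, D w = Pd κ δ β1 β2 w := fun w => (hasDerivAt_mapψ κ δ β1 β2 w).deriv
    set g : ℝ → ℝ := fun w => mapψ κ δ β1 β2 w - w with hgdef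
    have hgd : ∀ w, HasDerivAt g (Pd κ δ β1 β2 w - 1) w := fun w =>
      (hasDerivAt_mapψ κ δ β1 β2 w).sub (hasDerivAt_id w)
    have hgc : Continuous g := (continuous_mapψ κ δ β1 β2).sub continuous_id
    have hgF : ∀ w, w ∈ F ↔ g w = 0 := fun w => by
      show mapψ κ δ β1 β2 w = w ↔ mapψ κ δ β1 β2 w - w = 0
      exact sub_eq_zero.symm
    have hgl : ∀ w, w ≤ β1 * κ - 1 → 0 < g w := fun w hw => by
      have h1 := (mapψ_bounds κ δ β1 β2 hδpos.le hβ1 w).1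
      show 0 < mapψ κ δ β1 β2 w - w
      linarith
    have hgr : ∀ w, β1 * (κ + δ) + 1 ≤ w → g w < 0 := fun w hw => by
      have h1 := (mapψ_bounds κ δ β1 β2 hδpos.le hβ1 w).2
      show mapψ κ δ β1 β2 w - w < 0
      linarith
    have hanti : ∀ p : ℝ, (∀ w, w < p → Pd κ δ β1 β2 w < 1) →
        StrictAntiOn g (Set.Iic p) := fun p hp =>
      strictAntiOn_of_deriv_neg (convex_Iic p) hgc.continuousOn (fun x hx => by
        rw [interior_Iic] at hx
        rw [(hgd x).deriv]
        linarith [hp x hx])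
    have hanti' : ∀ q : ℝ, (∀ w, q < w → Pd κ δ β1 β2 w < 1) →
        StrictAntiOn g (Set.Ici q) := fun q hq =>
      strictAntiOn_of_deriv_neg (convex_Ici q) hgc.continuousOn (fun x hx => by
        rw [interior_Ici] at hx
        rw [(hgd x).deriv]
        linarith [hq x hx])
    rcases le_or_gt (Pd κ δ β1 β2 z) 1 with hPz | hPz
    · -- at most one fixed point : case A
      have hS1 : ∀ w, w ≠ z → Pd κ δ β1 β2 w < 1 := fun w hw => by
        rcases lt_or_gt_of_ne hw with h | h
        · exact lt_of_lt_of_le (hPmono h.le (le_refl z) h) hPz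
        · exact lt_of_lt_of_le (hPanti (le_refl z) h.le h) hPz
      have SA1 := hanti z (fun w hw => hS1 w hw.ne)
      have SA2 := hanti' z (fun w hw => hS1 w hw.ne')
      have hdec : ∀ a b, a < b → g b < g a := by
        intro a b hab
        rcases le_or_gt b z with hbz | hbz
        · exact SA1 (hab.le.trans hbz) hbz hab
        · rcases le_or_gt a z with haz | haz
          · have h1 : g b < g z := SA2 (le_refl z) hbz.le hbz
            rcases eq_or_lt_of_le haz with rfl | haz'
            · exact h1
            · exact h1.trans (SA1 haz (le_refl z) haz')
          · exact SA2 haz.le hbz.le hab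
      have ha0 : 0 < g (β1 * κ - 1) := hgl _ (le_refl _)
      have hb0 : g (β1 * (κ + δ) + 1) < 0 := hgr _ (le_refl _)
      have hab : β1 * κ - 1 < β1 * (κ + δ) + 1 := by
        nlinarith [mul_nonneg hβ1.le hδpos.le]
      obtain ⟨wbar, -, hwbar⟩ := intermediate_value_Icc' hab.le hgc.continuousOn
        ⟨hb0.le, ha0.le⟩
      have hF : F = {wbar} := by
        ext w
        rw [hgF w, Set.mem_singleton_iff]
        constructor
        · intro hw
          rcases lt_trichotomy w wbar with h | h | h
          · exact absurd (hdec w wbar h) (by rw [hw, hwbar]; exact lt_irrefl 0)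
          · exact h
          · exact absurd (hdec wbar w h) (by rw [hw, hwbar]; exact lt_irrefl 0)
        · rintro rfl; exact hwbar
      refine Or.inl ⟨?_, ?_, ?_⟩
      · rw [hAdef]
        refine ⟨wbar, hF, ?_⟩
        rw [hDP]
        rcases le_or_gt wbar z with h | h
        · exact le_trans (hPmono.monotoneOn h (le_refl z) h) hPz
        · exact le_trans (hPanti.antitoneOn (le_refl z) h.le h.le) hPz
      · rw [hBdef]; rintro ⟨wm, wp, hlt, hFB, -⟩
        exact set_ne_12 (hF.symm.trans hFB) hlt
      · rw [hCdef]; rintro ⟨x, y, z', h1, h2, hFC, -⟩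
        exact set_ne_13 (hF.symm.trans hFC) h1 h2
    · -- Pd z > 1
      have hCpos : (0:ℝ) < β1 * β2 * δ^2 := by positivity
      set a : ℝ := min (z - 1) (Real.log (1 / (2 * (β1 * β2 * δ^2)))) with hadef
      set b : ℝ := max (z + 1) (Real.log (2 * (β1 * β2 * δ^2))) with hbdef
      have hPa : Pd κ δ β1 β2 a < 1 := by
        have h1 := (Pd_le_exp κ δ β1 β2 hδpos.le hβ1 hβ2 a).1
        have h2 : Real.exp a ≤ 1 / (2 * (β1 * β2 * δ^2)) := by
          calc Real.exp a ≤ Real.exp (Real.log (1 / (2 * (β1 * β2 * δ^2)))) :=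
                Real.exp_le_exp.2 (min_le_right _ _)
            _ = 1 / (2 * (β1 * β2 * δ^2)) := Real.exp_log (by positivity)
        have h3 : β1 * β2 * δ^2 * Real.exp a ≤ β1 * β2 * δ^2 *
            (1 / (2 * (β1 * β2 * δ^2))) := mul_le_mul_of_nonneg_left h2 hCpos.le
        have h4 : β1 * β2 * δ^2 * (1 / (2 * (β1 * β2 * δ^2))) = 1/2 := by
          field_simp
        linarith
      have hPb : Pd κ δ β1 β2 b < 1 := by
        have h1 := (Pd_le_exp κ δ β1 β2 hδpos.le hβ1 hβ2 b).2
        have h2 : Real.exp (-b) ≤ 1 / (2 * (β1 * β2 * δ^2)) := by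
          have h5 : 2 * (β1 * β2 * δ^2) ≤ Real.exp b := by
            calc 2 * (β1 * β2 * δ^2)
                = Real.exp (Real.log (2 * (β1 * β2 * δ^2))) :=
                  (Real.exp_log (by positivity)).symm
              _ ≤ Real.exp b := Real.exp_le_exp.2 (le_max_right _ _)
          rw [Real.exp_neg, one_div]
          exact inv_anti₀ (by positivity) h5
        have h3 : β1 * β2 * δ^2 * Real.exp (-b) ≤ β1 * β2 * δ^2 *
            (1 / (2 * (β1 * β2 * δ^2))) := mul_le_mul_of_nonneg_left h2 hCpos.le
        have h4 : β1 * β2 * δ^2 * (1 / (2 * (β1 * β2 * δ^2))) = 1/2 := by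
          field_simp
        linarith
      have haz : a < z := lt_of_le_of_lt (min_le_left _ _) (by linarith)
      have hzb : z < b := lt_of_lt_of_le (by linarith) (le_max_left _ _)
      obtain ⟨p, hpmem, hPp⟩ := intermediate_value_Icc haz.le
        (continuous_Pd κ δ β1 β2).continuousOn ⟨hPa.le, hPz.le⟩
      obtain ⟨q, hqmem, hPq⟩ := intermediate_value_Icc' hzb.le
        (continuous_Pd κ δ β1 β2).continuousOn ⟨hPb.le, hPz.le⟩
      have hpz : p < z := lt_of_le_of_ne hpmem.2 (fun h => by rw [h] at hPp; linarith)
      have hzq : z < q := lt_of_le_of_ne hqmem.1 (fun h => by rw [← h] at hPq; linarith)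
      have hpq : p < q := hpz.trans hzq
      have S1 : ∀ w, w < p → Pd κ δ β1 β2 w < 1 := fun w hw => by
        rw [← hPp]; exact hPmono (hw.le.trans hpmem.2) hpmem.2 hw
      have S2 : ∀ w, p < w → w < q → 1 < Pd κ δ β1 β2 w := fun w h1 h2 => by
        rcases le_or_gt w z with h | h
        · rw [← hPp]; exact hPmono hpmem.2 h h1
        · rw [← hPq]; exact hPanti h.le hqmem.1 h2
      have S3 : ∀ w, q < w → Pd κ δ β1 β2 w < 1 := fun w hw => by
        rw [← hPq]; exact hPanti hqmem.1 (hqmem.1.trans hw.le) hw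
      have GA1 : StrictAntiOn g (Set.Iic p) := hanti p S1
      have GA2 : StrictAntiOn g (Set.Ici q) := hanti' q S3
      have GM : StrictMonoOn g (Set.Icc p q) :=
        strictMonoOn_of_deriv_pos (convex_Icc p q) hgc.continuousOn (fun x hx => by
          rw [interior_Icc] at hx
          rw [(hgd x).deriv]
          linarith [S2 x hx.1 hx.2])
      have hgpq : g p < g q := GM ⟨le_refl p, hpq.le⟩ ⟨hpq.le, le_refl q⟩ hpq
      obtain ⟨a0, ha0p, hga0⟩ : ∃ a0, a0 < p ∧ 0 < g a0 :=
        ⟨min (p - 1) (β1 * κ - 1), lt_of_le_of_lt (min_le_left _ _) (by linarith),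
          hgl _ (min_le_right _ _)⟩
      obtain ⟨b0, hqb0, hgb0⟩ : ∃ b0, q < b0 ∧ g b0 < 0 :=
        ⟨max (q + 1) (β1 * (κ + δ) + 1), lt_of_lt_of_le (by linarith) (le_max_left _ _),
          hgr _ (le_max_right _ _)⟩
      rcases lt_trichotomy (g p) 0 with hgp | hgp | hgp
      · -- g p < 0
        obtain ⟨wm, hwmmem, hwm0⟩ := intermediate_value_Icc' ha0p.le hgc.continuousOn
          ⟨hgp.le, hga0.le⟩
        have hwmp : wm < p := lt_of_le_of_ne hwmmem.2 (fun h => by rw [h] at hwm0; linarith)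
        rcases lt_trichotomy (g q) 0 with hgq | hgq | hgq
        · -- unique fixed point wm : case A
          have hF : F = {wm} := by
            ext w
            rw [hgF w, Set.mem_singleton_iff]
            constructor
            · intro hw
              rcases le_or_gt w p with h | h
              · exact GA1.injOn h hwmmem.2 (hw.trans hwm0.symm)
              · rcases le_or_gt w q with h2 | h2
                · exfalso
                  have : g w ≤ g q := GM.monotoneOn ⟨h.le, h2⟩ ⟨hpq.le, le_refl q⟩ h2
                  rw [hw] at this; linarith
                · exfalso
                  have : g w < g q := GA2 (le_refl q) h2.le h2
                  rw [hw] at this; linarith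
            · rintro rfl; exact hwm0
          refine Or.inl ⟨?_, ?_, ?_⟩
          · rw [hAdef]
            exact ⟨wm, hF, by rw [hDP]; exact (S1 wm hwmp).le⟩
          · rw [hBdef]; rintro ⟨x, y, hlt, hFB, -⟩
            exact set_ne_12 (hF.symm.trans hFB) hlt
          · rw [hCdef]; rintro ⟨x, y, z', h1, h2, hFC, -⟩
            exact set_ne_13 (hF.symm.trans hFC) h1 h2
        · -- g q = 0 : two fixed points wm < q : case B (left pattern)
          have hF : F = {wm, q} := by
            ext w
            rw [hgF w]
            simp only [Set.mem_insert_iff, Set.mem_singleton_iff]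
            constructor
            · intro hw
              rcases le_or_gt w p with h | h
              · exact Or.inl (GA1.injOn h hwmmem.2 (hw.trans hwm0.symm))
              · rcases le_or_gt w q with h2 | h2
                · exact Or.inr (GM.injOn ⟨h.le, h2⟩ ⟨hpq.le, le_refl q⟩ (hw.trans hgq.symm))
                · exact Or.inr (GA2.injOn h2.le (le_refl q) (hw.trans hgq.symm))
            · rintro (rfl | rfl); exacts [hwm0, hgq]
          refine Or.inr (Or.inl ⟨?_, ?_, ?_⟩)
          · rw [hAdef]; rintro ⟨x, hFA, -⟩
            exact set_ne_12 (hFA.symm.trans hF) (hwmp.trans hpq)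
          · rw [hBdef]
            exact ⟨wm, q, hwmp.trans hpq, hF, Or.inl ⟨by rw [hDP]; exact S1 wm hwmp,
              by rw [hDP]; exact hPq⟩⟩
          · rw [hCdef]; rintro ⟨x, y, z', h1, h2, hFC, -⟩
            exact set_ne_23 (hF.symm.trans hFC) h1 h2
        · -- g p < 0 < g q : three fixed points : case C
          obtain ⟨wb, hwbmem, hwb0⟩ := intermediate_value_Icc hpq.le hgc.continuousOn
            ⟨hgp.le, hgq.le⟩
          have hpwb : p < wb := lt_of_le_of_ne hwbmem.1
            (fun h => by rw [← h] at hwb0; linarith)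
          have hwbq : wb < q := lt_of_le_of_ne hwbmem.2
            (fun h => by rw [h] at hwb0; linarith)
          obtain ⟨wp, hwpmem, hwp0⟩ := intermediate_value_Icc' hqb0.le hgc.continuousOn
            ⟨hgb0.le, hgq.le⟩
          have hqwp : q < wp := lt_of_le_of_ne hwpmem.1
            (fun h => by rw [← h] at hwp0; linarith)
          have hF : F = {wm, wb, wp} := by
            ext w
            rw [hgF w]
            simp only [Set.mem_insert_iff, Set.mem_singleton_iff]
            constructor
            · intro hw
              rcases le_or_gt w p with h | h
              · exact Or.inl (GA1.injOn h hwmmem.2 (hw.trans hwm0.symm))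
              · rcases le_or_gt w q with h2 | h2
                · exact Or.inr (Or.inl (GM.injOn ⟨h.le, h2⟩ hwbmem (hw.trans hwb0.symm)))
                · exact Or.inr (Or.inr (GA2.injOn h2.le hwpmem.1 (hw.trans hwp0.symm)))
            · rintro (rfl | rfl | rfl); exacts [hwm0, hwb0, hwp0]
          refine Or.inr (Or.inr ⟨?_, ?_, ?_⟩)
          · rw [hAdef]; rintro ⟨x, hFA, -⟩
            exact set_ne_13 (hFA.symm.trans hF) (hwmp.trans hpwb) (hwbq.trans hqwp)
          · rw [hBdef]; rintro ⟨x, y, hlt, hFB, -⟩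
            exact set_ne_23 (hFB.symm.trans hF) (hwmp.trans hpwb) (hwbq.trans hqwp)
          · rw [hCdef]
            exact ⟨wm, wb, wp, hwmp.trans hpwb, hwbq.trans hqwp, hF,
              by rw [hDP]; exact S1 wm hwmp, by rw [hDP]; exact S3 wp hqwp,
              by rw [hDP]; exact S2 wb hpwb hwbq⟩
      · -- g p = 0 : two fixed points p < wp : case B (right pattern)
        have hgq : 0 < g q := by linarith
        obtain ⟨wp, hwpmem, hwp0⟩ := intermediate_value_Icc' hqb0.le hgc.continuousOn
          ⟨hgb0.le, hgq.le⟩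
        have hqwp : q < wp := lt_of_le_of_ne hwpmem.1
          (fun h => by rw [← h] at hwp0; linarith)
        have hF : F = {p, wp} := by
          ext w
          rw [hgF w]
          simp only [Set.mem_insert_iff, Set.mem_singleton_iff]
          constructor
          · intro hw
            rcases le_or_gt w p with h | h
            · exact Or.inl (GA1.injOn h (le_refl p) (hw.trans hgp.symm))
            · rcases le_or_gt w q with h2 | h2
              · exact Or.inl (GM.injOn ⟨h.le, h2⟩ ⟨le_refl p, hpq.le⟩ (hw.trans hgp.symm))
              · exact Or.inr (GA2.injOn h2.le hwpmem.1 (hw.trans hwp0.symm))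
          · rintro (rfl | rfl); exacts [hgp, hwp0]
        refine Or.inr (Or.inl ⟨?_, ?_, ?_⟩)
        · rw [hAdef]; rintro ⟨x, hFA, -⟩
          exact set_ne_12 (hFA.symm.trans hF) (hpq.trans hqwp)
        · rw [hBdef]
          exact ⟨p, wp, hpq.trans hqwp, hF, Or.inr ⟨by rw [hDP]; exact S3 wp hqwp,
            by rw [hDP]; exact hPp⟩⟩
        · rw [hCdef]; rintro ⟨x, y, z', h1, h2, hFC, -⟩
          exact set_ne_23 (hF.symm.trans hFC) h1 h2
      · -- 0 < g p : unique fixed point wp : case A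
        have hgq : 0 < g q := hgp.trans hgpq
        obtain ⟨wp, hwpmem, hwp0⟩ := intermediate_value_Icc' hqb0.le hgc.continuousOn
          ⟨hgb0.le, hgq.le⟩
        have hqwp : q < wp := lt_of_le_of_ne hwpmem.1
          (fun h => by rw [← h] at hwp0; linarith)
        have hF : F = {wp} := by
          ext w
          rw [hgF w, Set.mem_singleton_iff]
          constructor
          · intro hw
            rcases le_or_gt w p with h | h
            · exfalso
              have : g p ≤ g w := GA1.antitoneOn h (le_refl p) h
              rw [hw] at this; linarith
            · rcases le_or_gt w q with h2 | h2
              · exfalso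
                have : g p ≤ g w := GM.monotoneOn ⟨le_refl p, hpq.le⟩ ⟨h.le, h2⟩ h.le
                rw [hw] at this; linarith
              · exact GA2.injOn h2.le hwpmem.1 (hw.trans hwp0.symm)
          · rintro rfl; exact hwp0
        refine Or.inl ⟨?_, ?_, ?_⟩
        · rw [hAdef]
          exact ⟨wp, hF, by rw [hDP]; exact (S3 wp hqwp).le⟩
        · rw [hBdef]; rintro ⟨x, y, hlt, hFB, -⟩
          exact set_ne_12 (hF.symm.trans hFB) hlt
        · rw [hCdef]; rintro ⟨x, y, z', h1, h2, hFC, -⟩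
          exact set_ne_13 (hF.symm.trans hFC) h1 h2
end

section
/- Let w < w' be fixed points of ψ and let x = X(w), x' = X(w') be the corresponding rest points, where X(u) = ( C₁ᵃ + δᵃ·ρ(β₂φ(u)), C₂ᵇ − δᵇ·ρ(β₂φ(u)), C₁ᵃ + δᵃ·ρ(u), C₂ᵇ − δᵇ·ρ(u) ). Then x ≤ₛ x' for the sign pattern s = (1, −1, −1, 1); that is, x¹ᵃ ≤ x'¹ᵃ, x¹ᵇ ≥ x'¹ᵇ, x²ᵃ ≥ x'²ᵃ and x²ᵇ ≤ x'²ᵇ. In particular, when ψ has three fixed points w₋ < w̄ < w₊, the corresponding rest points satisfy x₋ ≤ₛ x̄ ≤ₛ x₊. -/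

lemma logitρ_anti {a b : ℝ} (h : a ≤ b) : logitρ b ≤ logitρ a := by
  unfold logitρ
  have h1 : (0:ℝ) < 1 + Real.exp a := by positivity
  gcongr


/-- Rest points corresponding to ordered fixed points `w < w'` of `ψ` are ordered in
the partial order `≤ₛ` induced by the orthant with sign pattern `s = (1,-1,-1,1)`:
`x¹ᵃ ≤ x'¹ᵃ`, `x¹ᵇ ≥ x'¹ᵇ`, `x²ᵃ ≥ x'²ᵃ`, `x²ᵇ ≤ x'²ᵇ`. -/
theorem rest_points_ordered
    (C1a C2a C1b C2b β1 β2 : ℝ) (hca : C1a ≤ C2a) (hcb : C1b ≤ C2b)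
    (hβ1 : 0 < β1) (hβ2 : 0 < β2)
    (w w' : ℝ) (hww' : w < w')
    (hw : mapψ (C1a - C2b) ((C2a - C1a) + (C2b - C1b)) β1 β2 w = w)
    (hw' : mapψ (C1a - C2b) ((C2a - C1a) + (C2b - C1b)) β1 β2 w' = w') :
    (restPointOfW C1a C2a C1b C2b β2 w).1 ≤ (restPointOfW C1a C2a C1b C2b β2 w').1 ∧
    (restPointOfW C1a C2a C1b C2b β2 w).2.1 ≥ (restPointOfW C1a C2a C1b C2b β2 w').2.1 ∧
    (restPointOfW C1a C2a C1b C2b β2 w).2.2.1 ≥ (restPointOfW C1a C2a C1b C2b β2 w').2.2.1 ∧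
    (restPointOfW C1a C2a C1b C2b β2 w).2.2.2 ≤ (restPointOfW C1a C2a C1b C2b β2 w').2.2.2 := by
  have hδa : 0 ≤ C2a - C1a := by linarith
  have hδb : 0 ≤ C2b - C1b := by linarith
  have hρ : logitρ w' ≤ logitρ w := logitρ_anti hww'.le
  have hφ : mapφ (C1a - C2b) ((C2a - C1a) + (C2b - C1b)) w' ≤
      mapφ (C1a - C2b) ((C2a - C1a) + (C2b - C1b)) w := by
    unfold mapφ; nlinarith
  have hρ2 : logitρ (β2 * mapφ (C1a - C2b) ((C2a - C1a) + (C2b - C1b)) w) ≤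
      logitρ (β2 * mapφ (C1a - C2b) ((C2a - C1a) + (C2b - C1b)) w') := by
    apply logitρ_anti
    exact mul_le_mul_of_nonneg_left hφ hβ2.le
  unfold restPointOfW
  refine ⟨by dsimp; nlinarith, by dsimp; nlinarith, by dsimp; nlinarith, by dsimp; nlinarith⟩
end

section
/- The function θ has a unique fixed point: there exists exactly one w̄ ∈ ℝ with θ(w̄) = w̄. -/
/-- `θ(w) = β(κ + δ ρ(w))`, the one player map in the symmetric `2×2` game. -/
noncomputable def mapθ (κ δ β w : ℝ) : ℝ := β * (κ + δ * logitρ w)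

/-- The map `θ` has exactly one fixed point. -/
theorem theta_unique_fixed_point (κ δ β : ℝ) (hδ : 0 ≤ δ) (hβ : 0 < β) :
    ∃! w : ℝ, mapθ κ δ β w = w := by
  have hρpos : ∀ w : ℝ, 0 < logitρ w := fun w => by
    unfold logitρ; positivity
  have hρle : ∀ w : ℝ, logitρ w ≤ 1 := fun w => by
    unfold logitρ
    rw [div_le_one (by positivity)]
    linarith [Real.exp_pos w]
  have hθub : ∀ w : ℝ, mapθ κ δ β w ≤ β * (κ + δ) := fun w => by
    unfold mapθ
    have h1 := hρle w
    have h3 : δ * logitρ w ≤ δ := by nlinarith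
    exact mul_le_mul_of_nonneg_left (by linarith) hβ.le
  have hθlb : ∀ w : ℝ, β * κ ≤ mapθ κ δ β w := fun w => by
    unfold mapθ
    have h3 : 0 ≤ δ * logitρ w := mul_nonneg hδ (hρpos w).le
    exact mul_le_mul_of_nonneg_left (by linarith) hβ.le
  have hanti : Antitone (fun w => mapθ κ δ β w) := by
    intro a b hab
    simp only [mapθ, logitρ]
    have h1 : (0:ℝ) < 1 + Real.exp a := by positivity
    have h2 : 1 + Real.exp a ≤ 1 + Real.exp b := by
      have := Real.exp_le_exp.mpr hab; linarith
    have h3 : 1 / (1 + Real.exp b) ≤ 1 / (1 + Real.exp a) :=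
      one_div_le_one_div_of_le h1 h2
    have h4 : δ * (1 / (1 + Real.exp b)) ≤ δ * (1 / (1 + Real.exp a)) :=
      mul_le_mul_of_nonneg_left h3 hδ
    exact mul_le_mul_of_nonneg_left (by linarith) hβ.le
  set f : ℝ → ℝ := fun w => w - mapθ κ δ β w with hf
  have hmono : StrictMono f := by
    intro a b hab
    have := hanti hab.le
    simp only [hf]
    dsimp only at this ⊢
    linarith
  have hcont : Continuous f := by
    have h1 : Continuous fun w : ℝ => logitρ w := by
      unfold logitρ
      exact continuous_const.div (continuous_const.add Real.continuous_exp)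
        (fun w => by positivity)
    have h2 : Continuous fun w : ℝ => mapθ κ δ β w := by
      unfold mapθ
      exact continuous_const.mul (continuous_const.add (continuous_const.mul h1))
    exact continuous_id.sub h2
  have hab : β * κ ≤ β * (κ + δ) := by nlinarith
  have hfa : f (β * κ) ≤ 0 := by
    simp only [hf]
    linarith [hθlb (β * κ)]
  have hfb : 0 ≤ f (β * (κ + δ)) := by
    simp only [hf]
    linarith [hθub (β * (κ + δ))]
  obtain ⟨w, hw, hfw⟩ := intermediate_value_Icc hab hcont.continuousOn ⟨hfa, hfb⟩
  refine ⟨w, ?_, ?_⟩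
  · have : w - mapθ κ δ β w = 0 := hfw
    linarith
  · intro y hy
    have hfy : f y = 0 := by simp only [hf]; linarith
    exact hmono.injective (by rw [hfy, hfw])
end

section
/- Let w̄ be the unique fixed point of θ and set ψ = θ ∘ θ. If ψ'(w̄) ≤ 1, then w̄ is the only fixed point of ψ: {w ∈ ℝ : ψ(w) = w} = {w̄}. -/
lemma exp_key {t : ℝ} (ht : 0 < t) : 2 * (Real.exp t - 1) < t * (Real.exp t + 1) := by
  have hmono : StrictMonoOn (fun t : ℝ => t * (Real.exp t + 1) - 2 * (Real.exp t - 1)) (Set.Ici 0) := by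
    apply strictMonoOn_of_deriv_pos (convex_Ici 0)
    · fun_prop
    · intro x hx
      rw [interior_Ici, Set.mem_Ioi] at hx
      have hD : HasDerivAt (fun t : ℝ => t * (Real.exp t + 1) - 2 * (Real.exp t - 1))
          (1 * (Real.exp x + 1) + x * Real.exp x - 2 * Real.exp x) x :=
        ((hasDerivAt_id x).mul ((Real.hasDerivAt_exp x).add_const 1)).sub
          (((Real.hasDerivAt_exp x).sub_const 1).const_mul 2)
      rw [hD.deriv]
      have h1 : (-x) + 1 < Real.exp (-x) := Real.add_one_lt_exp (by linarith)
      have h2 : Real.exp (-x) * Real.exp x = 1 := by rw [← Real.exp_add]; simp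
      nlinarith [Real.exp_pos x, mul_lt_mul_of_pos_right h1 (Real.exp_pos x)]
  have h := hmono (Set.self_mem_Ici) (Set.mem_Ici.mpr ht.le) ht
  simp only [Real.exp_zero] at h
  nlinarith [h]

lemma mapθ_dec (κ δ β : ℝ) (hδ : 0 < δ) (hβ : 0 < β) {u v : ℝ} (huv : u < v) :
    mapθ κ δ β v < mapθ κ δ β u := by
  have h1 : Real.exp u < Real.exp v := Real.exp_lt_exp.mpr huv
  have h2 : logitρ v < logitρ u := by
    unfold logitρ
    exact div_lt_div_of_pos_left one_pos (by positivity) (by linarith)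
  unfold mapθ
  nlinarith [h2, mul_lt_mul_of_pos_left h2 hδ]

set_option maxHeartbeats 1000000 in
lemma core (κ δ β wb w : ℝ) (hδ : 0 < δ) (hβ : 0 < β)
    (hwb : mapθ κ δ β wb = wb)
    (hS : β * δ * Real.exp wb ≤ (1 + Real.exp wb) ^ 2)
    (hfix : mapθ κ δ β (mapθ κ δ β w) = w)
    (hlt : w < mapθ κ δ β w) : False := by
  -- ordering: w < wb < mapθ κ δ β w
  have hwlt : w < wb := by
    by_contra h
    push_neg at h
    rcases eq_or_lt_of_le h with h' | h'
    · subst h'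
      rw [hwb] at hlt
      exact lt_irrefl _ hlt
    · have := mapθ_dec κ δ β hδ hβ h'
      rw [hwb] at this
      linarith
  have hwb2 : wb < mapθ κ δ β w := by
    have := mapθ_dec κ δ β hδ hβ hwlt
    rw [hwb] at this
    linarith
  set w2 := mapθ κ δ β w with hw2def
  set E := Real.exp wb with hEdef
  have hEpos : 0 < E := Real.exp_pos wb
  set a := w2 - wb with hadef
  set b := wb - w with hbdef
  have ha : 0 < a := by simp [hadef]; linarith
  have hb : 0 < b := by simp [hbdef]; linarith
  set P := Real.exp a with hPdef
  set Q := Real.exp b with hQdef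
  have hP : 1 < P := by rw [hPdef]; simpa using Real.exp_lt_exp.mpr ha
  have hQ : 1 < Q := by rw [hQdef]; simpa using Real.exp_lt_exp.mpr hb
  have hexpw : Real.exp w = E / Q := by
    rw [hEdef, hQdef, ← Real.exp_sub]
    congr 1
    rw [hbdef]; ring
  have hexpw2 : Real.exp w2 = E * P := by
    rw [hEdef, hPdef, ← Real.exp_add]
    congr 1
    rw [hadef]; ring
  have hQpos : 0 < Q := by linarith
  have hQE : (0:ℝ) < Q + E := by linarith
  have h1E : (0:ℝ) < 1 + E := by linarith
  have h1EP : (0:ℝ) < 1 + E * P := by nlinarith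
  have hl1 : logitρ w = Q / (Q + E) := by
    unfold logitρ
    rw [hexpw]
    field_simp
  have hl2 : logitρ w2 = 1 / (1 + E * P) := by
    unfold logitρ
    rw [hexpw2]
  have heq1 : β * (κ + δ * (Q / (Q + E))) = wb + a := by
    rw [← hl1]
    have : β * (κ + δ * logitρ w) = w2 := rfl
    rw [this, hadef]; ring
  have heq2 : β * (κ + δ * (1 / (1 + E))) = wb := by
    rw [hEdef]; exact hwb
  have heq3 : β * (κ + δ * (1 / (1 + E * P))) = wb - b := by
    rw [← hl2]
    have : β * (κ + δ * logitρ w2) = mapθ κ δ β w2 := rfl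
    rw [this, hw2def, hfix, hbdef]; ring
  have F1 : a * ((Q + E) * (1 + E)) = β * δ * (E * (Q - 1)) := by
    field_simp at heq1 heq2
    linear_combination (Q + E) * heq2 - (1 + E) * heq1
  have F2 : b * ((1 + E) * (1 + E * P)) = β * δ * (E * (P - 1)) := by
    field_simp at heq2 heq3
    linear_combination (1 + E) * heq3 - (1 + E * P) * heq2
  have hQ1 : (0:ℝ) < Q - 1 := by linarith
  have hP1 : (0:ℝ) < P - 1 := by linarith
  have hii : a * (Q + E) ≤ (1 + E) * (Q - 1) := by
    have h := mul_le_mul_of_nonneg_right hS hQ1.le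
    apply le_of_mul_le_mul_right _ h1E
    linarith [F1, h]
  have hi : b * (1 + E * P) ≤ (1 + E) * (P - 1) := by
    have h := mul_le_mul_of_nonneg_right hS hP1.le
    apply le_of_mul_le_mul_right _ h1E
    linarith [F2, h]
  have hL1 : 2 * (P - 1) < a * (P + 1) := by
    have h := exp_key ha
    rw [← hPdef] at h
    linarith
  have hL2 : 2 * (Q - 1) < b * (Q + 1) := by
    have h := exp_key hb
    rw [← hQdef] at h
    linarith
  -- final chain
  set S1 := 2 * (E + 1) + a * (E - 1) with hS1def
  have hB' : a * (E + 1) * (Q + 1) ≤ (Q - 1) * S1 := by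
    rw [hS1def]; nlinarith [hii]
  have hS1 : 0 < S1 := by
    nlinarith [hB', mul_pos (mul_pos ha h1E) (show (0:ℝ) < Q + 1 by linarith)]
  have hC' : (P - 1) * S1 < 2 * a * (E * P + 1) := by
    rw [hS1def]; nlinarith [mul_lt_mul_of_pos_left hL1 h1E]
  have hb1 : (b * S1) * (1 + E * P) < (2 * a * (E + 1)) * (1 + E * P) := by
    nlinarith [mul_le_mul_of_nonneg_right hi hS1.le, mul_lt_mul_of_pos_left hC' h1E]
  have hb2 : b * S1 < 2 * a * (E + 1) := lt_of_mul_lt_mul_right hb1 h1EP.le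
  have hb3 : (b * (Q + 1)) * S1 < (2 * (Q - 1)) * S1 := by
    nlinarith [mul_lt_mul_of_pos_right hb2 (show (0:ℝ) < Q + 1 by linarith), hB']
  have hfin : b * (Q + 1) < 2 * (Q - 1) := lt_of_mul_lt_mul_right hb3 hS1.le
  linarith

lemma mapθ_hasDeriv (κ δ β x : ℝ) :
    HasDerivAt (mapθ κ δ β) (β * (δ * (-Real.exp x / (1 + Real.exp x) ^ 2))) x := by
  have hne : (1 : ℝ) + Real.exp x ≠ 0 := by positivity
  have h1 : HasDerivAt (fun w : ℝ => 1 + Real.exp w) (Real.exp x) x :=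
    (Real.hasDerivAt_exp x).const_add 1
  have h2 : HasDerivAt (fun w : ℝ => (1 + Real.exp w)⁻¹)
      (-Real.exp x / (1 + Real.exp x) ^ 2) x := h1.inv hne
  have h3 : HasDerivAt logitρ (-Real.exp x / (1 + Real.exp x) ^ 2) x := by
    have : logitρ = fun w : ℝ => (1 + Real.exp w)⁻¹ := by
      funext w; simp [logitρ, one_div]
    rw [this]; exact h2
  exact ((h3.const_mul δ).const_add κ).const_mul β

/-- If `w̄` is the (unique) fixed point of `θ` and `ψ = θ ∘ θ` satisfies
`ψ'(w̄) ≤ 1`, then `w̄` is the only fixed point of `ψ`. -/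
theorem symmetric_unique_rest_point (κ δ β : ℝ) (hδ : 0 < δ) (hβ : 0 < β)
    (wb : ℝ) (hwb : mapθ κ δ β wb = wb)
    (hstab : deriv (mapθ κ δ β ∘ mapθ κ δ β) wb ≤ 1) :
    {w : ℝ | (mapθ κ δ β ∘ mapθ κ δ β) w = w} = {wb} := by
  -- extract the stability inequality `βδ e^wb ≤ (1+e^wb)²` from `hstab`
  have hcomp : deriv (mapθ κ δ β ∘ mapθ κ δ β) wb =
      (β * (δ * (-Real.exp (mapθ κ δ β wb) / (1 + Real.exp (mapθ κ δ β wb)) ^ 2))) *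
        (β * (δ * (-Real.exp wb / (1 + Real.exp wb) ^ 2))) :=
    ((mapθ_hasDeriv κ δ β (mapθ κ δ β wb)).comp wb (mapθ_hasDeriv κ δ β wb)).deriv
  rw [hwb] at hcomp
  rw [hcomp] at hstab
  set E := Real.exp wb with hEdef
  have hEpos : 0 < E := Real.exp_pos wb
  have h2E : (0:ℝ) < (1 + E) ^ 2 := by positivity
  have hd : β * δ * E / (1 + E) ^ 2 ≤ 1 := by
    set d := β * δ * E / (1 + E) ^ 2 with hddef
    have hrw : β * (δ * (-E / (1 + E) ^ 2)) = -d := by rw [hddef]; ring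
    rw [hrw] at hstab
    have hdpos : 0 < d := by rw [hddef]; positivity
    nlinarith [hstab, hdpos]
  have hS : β * δ * Real.exp wb ≤ (1 + Real.exp wb) ^ 2 := by
    rw [← hEdef]
    rw [div_le_one h2E] at hd
    exact hd
  ext w
  simp only [Set.mem_setOf_eq, Set.mem_singleton_iff, Function.comp_apply]
  constructor
  · intro hfix
    rcases lt_trichotomy w (mapθ κ δ β w) with hlt | heq | hgt
    · exact (core κ δ β wb w hδ hβ hwb hS hfix hlt).elim
    · -- `w` is a fixed point of `θ` itself; θ is strictly decreasing, so `w = wb`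
      rcases lt_trichotomy w wb with h | h | h
      · exfalso
        have := mapθ_dec κ δ β hδ hβ h
        rw [hwb, ← heq] at this
        linarith
      · exact h
      · exfalso
        have := mapθ_dec κ δ β hδ hβ h
        rw [hwb, ← heq] at this
        linarith
    · -- apply `core` to `θ w` instead
      have hfix' : mapθ κ δ β (mapθ κ δ β (mapθ κ δ β w)) = mapθ κ δ β w := by
        rw [hfix]
      have hlt' : mapθ κ δ β w < mapθ κ δ β (mapθ κ δ β w) := by
        rw [hfix]; exact hgt
      exact (core κ δ β wb (mapθ κ δ β w) hδ hβ hwb hS hfix' hlt').elim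
  · intro h
    subst h
    rw [hwb, hwb]
end
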